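/- arXiv:1411.3870 — 8 statements merged into one kernel-verified Lean document; each statement's English description precedes it below -/
import Mathlib

section
/- (Pumping Lemma II) If a promise problem A = (A_yes, A_no) over a finite alphabet Σ is solved by a pvDFA 𝒜, then there exists an integer p ≥ 1 (depending only on 𝒜, one may take p = |S|) such that every word w ∈ A_yes of length at least p can be written as w = xyz with |y| ≥ 1, |xy| ≤ p, and x yᵗ z ∉ A_no for all integers t ≥ 0; and likewise every word w ∈ A_no of length at least p can be written as w = xyz with |y| ≥ 1, |xy| ≤ p, and x yᵗ z ∉ A_yes for all integers t ≥ 0. -/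
/-- The extended transition function `δ̂`: run a finite automaton's transition
function on a whole word. -/
def evalWord {α : Type} {n : ℕ} (δ : Fin n → α → Fin n) (s : Fin n) (w : List α) : Fin n :=
  w.foldl δ s

/-- A promise version deterministic finite automaton (pvDFA) over the
alphabet `α`, with (finite) state set `Fin n`, transition function `step`,
initial state `start`, and disjoint sets of accepting and rejecting states. -/
structure PVDFA (α : Type) (n : ℕ) where
  step : Fin n → α → Fin n
  start : Fin n
  accept : Finset (Fin n)
  reject : Finset (Fin n)
  disj : Disjoint accept reject

namespace PVDFA

/-- The state reached by the pvDFA after reading the word `w`. -/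
def eval {α : Type} {n : ℕ} (M : PVDFA α n) (w : List α) : Fin n :=
  evalWord M.step M.start w

/-- A pvDFA recognizes the promise problem `(Ayes, Ano)`: for every word `w`,
`w ∈ Ayes` iff the reached state is accepting, and `w ∈ Ano` iff it is rejecting. -/
def Recognizes {α : Type} {n : ℕ} (M : PVDFA α n) (Ayes Ano : Set (List α)) : Prop :=
  (∀ w, w ∈ Ayes ↔ M.eval w ∈ M.accept) ∧ (∀ w, w ∈ Ano ↔ M.eval w ∈ M.reject)

/-- A pvDFA solves the promise problem `(Ayes, Ano)`: every `w ∈ Ayes` leads to an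
accepting state and every `w ∈ Ano` leads to a rejecting state. -/
def Solves {α : Type} {n : ℕ} (M : PVDFA α n) (Ayes Ano : Set (List α)) : Prop :=
  (∀ w ∈ Ayes, M.eval w ∈ M.accept) ∧ (∀ w ∈ Ano, M.eval w ∈ M.reject)

end PVDFA


lemma pvdfa_split_aux {α : Type} {n : ℕ} (M : PVDFA α n) (w : List α)
    (hlen : n ≤ w.length) :
    ∃ x y z : List α, w = x ++ y ++ z ∧ 1 ≤ y.length ∧ (x ++ y).length ≤ n ∧
      ∀ t : ℕ, M.eval (x ++ (List.replicate t y).flatten ++ z) = M.eval w := by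
  let D : DFA α (Fin n) := ⟨M.step, M.start, ↑M.accept⟩
  have hlen' : Fintype.card (Fin n) ≤ w.length := by simpa
  obtain ⟨q, a, b, c, hw, hle, hb, ha, hb2, hc⟩ :=
    D.evalFrom_split (s := M.start) (t := D.evalFrom M.start w) hlen' rfl
  refine ⟨a, b, c, hw, List.length_pos_iff.mpr hb, by simpa using hle, ?_⟩
  have hrep : ∀ t, D.evalFrom q ((List.replicate t b).flatten) = q := by
    intro t
    induction t with
    | zero => simp [DFA.evalFrom]
    | succ k ih =>
      rw [List.replicate_succ, List.flatten_cons, DFA.evalFrom, List.foldl_append,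
        ← DFA.evalFrom, ← DFA.evalFrom, hb2, ih]
  intro t
  have : M.eval (a ++ (List.replicate t b).flatten ++ c)
      = D.evalFrom M.start (a ++ (List.replicate t b).flatten ++ c) := rfl
  rw [this, DFA.evalFrom, List.foldl_append, List.foldl_append, ← DFA.evalFrom]
  show D.evalFrom (D.evalFrom (D.evalFrom M.start a) ((List.replicate t b).flatten)) c = _
  rw [ha, hrep, hc]
  subst hw
  rfl

/-- Pumping Lemma II: if a pvDFA `M` solves the promise problem
`(Ayes, Ano)`, then there is `p ≥ 1` such that every sufficiently long word in
`Ayes` (resp. `Ano`) can be pumped outside `Ano` (resp. `Ayes`). -/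
theorem pumping_lemma_II {α : Type} [Fintype α] (Ayes Ano : Set (List α))
    (hdisj : Disjoint Ayes Ano) {n : ℕ} (M : PVDFA α n)
    (hsol : M.Solves Ayes Ano) :
    ∃ p : ℕ, 1 ≤ p ∧
      (∀ w ∈ Ayes, p ≤ w.length →
        ∃ x y z : List α, w = x ++ y ++ z ∧ 1 ≤ y.length ∧ (x ++ y).length ≤ p ∧
          ∀ t : ℕ, x ++ (List.replicate t y).flatten ++ z ∉ Ano) ∧
      (∀ w ∈ Ano, p ≤ w.length →
        ∃ x y z : List α, w = x ++ y ++ z ∧ 1 ≤ y.length ∧ (x ++ y).length ≤ p ∧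
          ∀ t : ℕ, x ++ (List.replicate t y).flatten ++ z ∉ Ayes) := by

  obtain ⟨hyes, hno⟩ := hsol
  refine ⟨n, M.start.pos, ?_, ?_⟩
  · intro w hw hlenw
    obtain ⟨x, y, z, hsplit, hy, hxy, heq⟩ := pvdfa_split_aux M w hlenw
    refine ⟨x, y, z, hsplit, hy, hxy, fun t hmem => ?_⟩
    have h1 : M.eval w ∈ M.accept := hyes w hw
    have h2 : M.eval w ∈ M.reject := heq t ▸ hno _ hmem
    exact Finset.disjoint_left.mp M.disj h1 h2
  · intro w hw hlenw
    obtain ⟨x, y, z, hsplit, hy, hxy, heq⟩ := pvdfa_split_aux M w hlenw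
    refine ⟨x, y, z, hsplit, hy, hxy, fun t hmem => ?_⟩
    have h1 : M.eval w ∈ M.reject := hno w hw
    have h2 : M.eval w ∈ M.accept := heq t ▸ hyes _ hmem
    exact Finset.disjoint_left.mp M.disj h2 h1
end

section
/- Let A = (A_yes, A_no) and B = (B_yes, B_no) be promise problems over the same finite alphabet Σ, each recognized by a pvDFA, and suppose their union exists, i.e. (A_yes ∪ B_yes) ∩ (A_no ∪ B_no) = ∅. Then the union C = (A_yes ∪ B_yes, A_no ∪ B_no) can also be recognized by a pvDFA. -/

private lemma prod_evalWord {α : Type} {n m : ℕ} (δ1 : Fin n → α → Fin n)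
    (δ2 : Fin m → α → Fin m) (w : List α) :
    ∀ (s : Fin n) (t : Fin m),
      evalWord (fun p a => (finProdFinEquiv ((δ1 (finProdFinEquiv.symm p).1 a,
          δ2 (finProdFinEquiv.symm p).2 a) : Fin n × Fin m)))
        (finProdFinEquiv (s, t)) w
      = finProdFinEquiv (evalWord δ1 s w, evalWord δ2 t w) := by
  induction w with
  | nil => intro s t; rfl
  | cons a w ih =>
    intro s t
    simp only [evalWord, List.foldl_cons, Equiv.symm_apply_apply]
    exact ih (δ1 s a) (δ2 t a)

/-- if the union `(A_yes ∪ B_yes, A_no ∪ B_no)` of two promise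
problems recognizable by pvDFA exists (i.e. `(A_yes ∪ B_yes) ∩ (A_no ∪ B_no) = ∅`),
then it is recognizable by a pvDFA. -/
theorem union_recognized {α : Type} [Fintype α]
    (Ayes Ano Byes Bno : Set (List α))
    (hA : Disjoint Ayes Ano) (hB : Disjoint Byes Bno)
    (hunion : (Ayes ∪ Byes) ∩ (Ano ∪ Bno) = ∅)
    (hArec : ∃ (n : ℕ) (M : PVDFA α n), M.Recognizes Ayes Ano)
    (hBrec : ∃ (m : ℕ) (N : PVDFA α m), N.Recognizes Byes Bno) :
    ∃ (k : ℕ) (K : PVDFA α k), K.Recognizes (Ayes ∪ Byes) (Ano ∪ Bno) := by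
  classical
  obtain ⟨n, M, hMy, hMn⟩ := hArec
  obtain ⟨m, N, hNy, hNn⟩ := hBrec
  set e := (finProdFinEquiv : Fin n × Fin m ≃ Fin (n * m))
  let step : Fin (n * m) → α → Fin (n * m) :=
    fun p a => e ((M.step (e.symm p).1 a, N.step (e.symm p).2 a) : Fin n × Fin m)
  let good : Fin (n * m) → Prop := fun p => ∃ w : List α,
    M.eval w = (e.symm p).1 ∧ N.eval w = (e.symm p).2
  let acc : Finset (Fin (n * m)) := Finset.univ.filter
    (fun p => good p ∧ ((e.symm p).1 ∈ M.accept ∨ (e.symm p).2 ∈ N.accept))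
  let rej : Finset (Fin (n * m)) := Finset.univ.filter
    (fun p => good p ∧ ((e.symm p).1 ∈ M.reject ∨ (e.symm p).2 ∈ N.reject))
  have keval : ∀ w : List α,
      evalWord step (e (M.start, N.start)) w = e (M.eval w, N.eval w) := by
    intro w
    exact prod_evalWord M.step N.step w M.start N.start
  have hdisj : Disjoint acc rej := by
    rw [Finset.disjoint_left]
    intro p hpa hpr
    simp only [acc, rej, Finset.mem_filter, Finset.mem_univ, true_and] at hpa hpr
    obtain ⟨⟨w, hw1, hw2⟩, ha⟩ := hpa
    obtain ⟨_, hr⟩ := hpr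
    have hy : w ∈ Ayes ∪ Byes := by
      rcases ha with h | h
      · exact Or.inl ((hMy w).2 (hw1 ▸ h))
      · exact Or.inr ((hNy w).2 (hw2 ▸ h))
    have hn : w ∈ Ano ∪ Bno := by
      rcases hr with h | h
      · exact Or.inl ((hMn w).2 (hw1 ▸ h))
      · exact Or.inr ((hNn w).2 (hw2 ▸ h))
    exact absurd (Set.mem_inter hy hn) (by simp [hunion])
  refine ⟨n * m, ⟨step, e (M.start, N.start), acc, rej, hdisj⟩, ?_, ?_⟩
  · intro w
    have hev : PVDFA.eval ⟨step, e (M.start, N.start), acc, rej, hdisj⟩ w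
        = e (M.eval w, N.eval w) := keval w
    rw [hev]
    simp only [acc, Finset.mem_filter, Finset.mem_univ, true_and, good,
      Equiv.symm_apply_apply]
    constructor
    · rintro (h | h)
      · exact ⟨⟨w, rfl, rfl⟩, Or.inl ((hMy w).1 h)⟩
      · exact ⟨⟨w, rfl, rfl⟩, Or.inr ((hNy w).1 h)⟩
    · rintro ⟨_, h | h⟩
      · exact Or.inl ((hMy w).2 h)
      · exact Or.inr ((hNy w).2 h)
  · intro w
    have hev : PVDFA.eval ⟨step, e (M.start, N.start), acc, rej, hdisj⟩ w
        = e (M.eval w, N.eval w) := keval w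
    rw [hev]
    simp only [rej, Finset.mem_filter, Finset.mem_univ, true_and, good,
      Equiv.symm_apply_apply]
    constructor
    · rintro (h | h)
      · exact ⟨⟨w, rfl, rfl⟩, Or.inl ((hMn w).1 h)⟩
      · exact ⟨⟨w, rfl, rfl⟩, Or.inr ((hNn w).1 h)⟩
    · rintro ⟨_, h | h⟩
      · exact Or.inl ((hMn w).2 h)
      · exact Or.inr ((hNn w).2 h)
end

section
/- Let A = (A_yes, A_no) with A_yes = {aⁿbⁿ : n odd} and A_no = {aⁿbᵐ : m ≠ n and at least one of m, n is even}, and let B = (B_yes, B_no) with B_yes = {aⁿbⁿ : n even} and B_no = {aⁿbᵐ : m ≠ n and at least one of m, n is odd}, both over the alphabet {a, b}. Then A and B can each be solved by a pvDFA, their union C = A ∪ B = ({aⁿbⁿ : n ≥ 0}, {aⁿbᵐ : n ≠ m}) exists, but C cannot be solved by any pvDFA. -/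
/-- The word `aⁿbᵐ` over the alphabet `{a, b}` (encoded as `Bool`, with
`a = false` and `b = true`). -/
def wordAB (n m : ℕ) : List Bool :=
  List.replicate n false ++ List.replicate m true

/-- `A_yes = {aⁿbⁿ : n odd}`. -/
def Ayes8 : Set (List Bool) := {w | ∃ n : ℕ, Odd n ∧ w = wordAB n n}

/-- `A_no = {aⁿbᵐ : m ≠ n and at least one of m, n is even}`. -/
def Ano8 : Set (List Bool) :=
  {w | ∃ n m : ℕ, m ≠ n ∧ (Even m ∨ Even n) ∧ w = wordAB n m}

/-- `B_yes = {aⁿbⁿ : n even}`. -/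
def Byes8 : Set (List Bool) := {w | ∃ n : ℕ, Even n ∧ w = wordAB n n}

/-- `B_no = {aⁿbᵐ : m ≠ n and at least one of m, n is odd}`. -/
def Bno8 : Set (List Bool) :=
  {w | ∃ n m : ℕ, m ≠ n ∧ (Odd m ∨ Odd n) ∧ w = wordAB n m}


lemma evalWord_append {α : Type} {n : ℕ} (δ : Fin n → α → Fin n) (s : Fin n)
    (u v : List α) : evalWord δ s (u ++ v) = evalWord δ (evalWord δ s u) v := by
  simp [evalWord, List.foldl_append]

lemma wordAB_inj {n m n' m' : ℕ} (h : wordAB n m = wordAB n' m') : n = n' ∧ m = m' := by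
  constructor
  · have := congrArg (List.count false) h
    simpa [wordAB, List.count_append, List.count_replicate] using this
  · have := congrArg (List.count true) h
    simpa [wordAB, List.count_append, List.count_replicate] using this

/-- Transition function of our 7-state automaton.
States: 0 = reading a's (even so far), 1 = reading a's (odd so far),
2,3,4,5 = reading b's with (a-parity, b-parity) = (e,e),(e,o),(o,e),(o,o),
6 = dead. -/
def stepM : Fin 7 → Bool → Fin 7 := fun s c =>
  if c then ![3, 5, 3, 2, 5, 4, 6] s else ![1, 0, 6, 6, 6, 6, 6] s

def fM (s : Fin 7) : Fin 7 := stepM s true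

lemma evalWord_rep_true (m : ℕ) (s : Fin 7) :
    evalWord stepM s (List.replicate m true) = fM^[m] s := by
  induction m generalizing s with
  | zero => rfl
  | succ m ih =>
      rw [List.replicate_succ]
      show evalWord stepM (stepM s true) (List.replicate m true) = _
      rw [ih, Function.iterate_succ_apply]
      rfl

lemma runA (k : ℕ) :
    evalWord stepM 0 (List.replicate k false) = if Even k then 0 else 1 := by
  induction k with
  | zero => simp [evalWord]
  | succ k ih =>
      rw [List.replicate_succ', evalWord_append, ih]
      by_cases h : Even k <;> simp [h, Nat.even_add_one, evalWord, stepM]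

lemma runB (m : ℕ) :
    fM^[m + 1] 0 = (if Even (m + 1) then 2 else 3) ∧
    fM^[m + 1] 1 = (if Even (m + 1) then 4 else 5) := by
  induction m with
  | zero => decide
  | succ m ih =>
      rw [Function.iterate_succ_apply' fM (m + 1) 0, Function.iterate_succ_apply' fM (m + 1) 1,
        ih.1, ih.2]
      by_cases h : Even (m + 1) <;> simp [h, Nat.even_add_one, fM, stepM] <;> decide

/-- The state of the machine after reading `wordAB k m`. -/
lemma evalM (k m : ℕ) :
    evalWord stepM 0 (wordAB k m) =
      if m = 0 then (if Even k then 0 else 1)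
      else if Even k then (if Even m then 2 else 3)
      else (if Even m then 4 else 5) := by
  rw [wordAB, evalWord_append, runA, evalWord_rep_true]
  rcases m with _ | m
  · simp
  · have hB := runB m
    by_cases h : Even k <;> simp [h, hB.1, hB.2]

lemma exists_kk (w : List Bool) (hw : w ∈ Ayes8 ∪ Byes8) : ∃ k, w = wordAB k k := by
  rcases hw with ⟨n, _, rfl⟩ | ⟨n, _, rfl⟩ <;> exact ⟨n, rfl⟩

/-- `A` and `B` can each be solved by a pvDFA, their union exists
and equals `({aⁿbⁿ}, {aⁿbᵐ : n ≠ m})`, but the union cannot be solved by any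
pvDFA. -/
theorem union_not_solvable :
    (∃ (n : ℕ) (M : PVDFA Bool n), M.Solves Ayes8 Ano8) ∧
    (∃ (n : ℕ) (M : PVDFA Bool n), M.Solves Byes8 Bno8) ∧
    ((Ayes8 ∪ Byes8) ∩ (Ano8 ∪ Bno8) = ∅) ∧
    (Ayes8 ∪ Byes8 = {w | ∃ k : ℕ, w = wordAB k k}) ∧
    (Ano8 ∪ Bno8 = {w | ∃ k m : ℕ, k ≠ m ∧ w = wordAB k m}) ∧
    ¬ ∃ (n : ℕ) (M : PVDFA Bool n), M.Solves (Ayes8 ∪ Byes8) (Ano8 ∪ Bno8) := by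
  constructor
  · -- A is solvable
    refine ⟨7, ⟨stepM, 0, {5}, {0, 1, 2, 3, 4, 6}, by decide⟩, ?_, ?_⟩
    · rintro w ⟨k, hk, rfl⟩
      have hk0 : k ≠ 0 := by rintro rfl; simp at hk
      have hko : ¬ Even k := Nat.not_even_iff_odd.mpr hk
      show evalWord stepM 0 (wordAB k k) ∈ _
      rw [evalM]
      simp [hk0, hko]
    · rintro w ⟨n, m, hnm, hpar, rfl⟩
      show evalWord stepM 0 (wordAB n m) ∈ _
      rw [evalM]
      rcases Nat.eq_zero_or_pos m with rfl | hm
      · by_cases h : Even n <;> simp [h]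
      · have hm0 : m ≠ 0 := hm.ne'
        rcases hpar with h | h
        · by_cases hn : Even n <;> simp [hm0, hn, h]
        · by_cases hmE : Even m <;> simp [hm0, h, hmE]
  refine ⟨?_, ?_, ?_, ?_, ?_⟩
  · -- B is solvable
    refine ⟨7, ⟨stepM, 0, {0, 2}, {1, 3, 4, 5, 6}, by decide⟩, ?_, ?_⟩
    · rintro w ⟨k, hk, rfl⟩
      show evalWord stepM 0 (wordAB k k) ∈ _
      rw [evalM]
      rcases Nat.eq_zero_or_pos k with rfl | hkpos
      · simp
      · simp [hkpos.ne', hk]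
    · rintro w ⟨n, m, hnm, hpar, rfl⟩
      show evalWord stepM 0 (wordAB n m) ∈ _
      rw [evalM]
      rcases Nat.eq_zero_or_pos m with rfl | hm
      · have hn : ¬ Even n := by
          rcases hpar with h | h
          · exact absurd h (by simp [Nat.odd_iff])
          · exact Nat.not_even_iff_odd.mpr h
        simp [hn]
      · have hm0 : m ≠ 0 := hm.ne'
        rcases hpar with h | h
        · have hmE : ¬ Even m := Nat.not_even_iff_odd.mpr h
          by_cases hn : Even n <;> simp [hm0, hn, hmE]
        · have hnE : ¬ Even n := Nat.not_even_iff_odd.mpr h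
          by_cases hmE : Even m <;> simp [hm0, hnE, hmE]
  · -- intersection empty
    ext w
    simp only [Set.mem_inter_iff, Set.mem_empty_iff_false, iff_false, not_and]
    intro hy hn
    obtain ⟨k, rfl⟩ := exists_kk w hy
    rcases hn with ⟨n, m, hnm, _, h⟩ | ⟨n, m, hnm, _, h⟩ <;>
      · obtain ⟨h1, h2⟩ := wordAB_inj h; omega
  · -- yes union
    ext w
    constructor
    · exact exists_kk w
    · rintro ⟨k, rfl⟩
      rcases Nat.even_or_odd k with h | h
      · exact Or.inr ⟨k, h, rfl⟩
      · exact Or.inl ⟨k, h, rfl⟩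
  · -- no union
    ext w
    constructor
    · rintro (⟨n, m, hnm, _, rfl⟩ | ⟨n, m, hnm, _, rfl⟩) <;>
        exact ⟨n, m, fun h => hnm h.symm, rfl⟩
    · rintro ⟨k, m, hkm, rfl⟩
      rcases Nat.even_or_odd m with h | h
      · exact Or.inl ⟨k, m, Ne.symm hkm, Or.inl h, rfl⟩
      · exact Or.inr ⟨k, m, Ne.symm hkm, Or.inl h, rfl⟩
  · -- not solvable
    rintro ⟨n, M, hyes, hno⟩
    set f : Fin (n + 1) → Fin n :=
      fun i => evalWord M.step M.start (List.replicate i.val false) with hf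
    obtain ⟨i, j, hij, hfij⟩ :=
      Fintype.exists_ne_map_eq_of_card_lt f (by simp)
    have hval : i.val ≠ j.val := fun h => hij (Fin.val_injective h)
    set a := i.val
    set b := j.val
    have heq : M.eval (wordAB a a) = M.eval (wordAB b a) := by
      show evalWord M.step M.start _ = evalWord M.step M.start _
      rw [wordAB, wordAB, evalWord_append, evalWord_append]
      rw [show evalWord M.step M.start (List.replicate a false) = f i from rfl,
        show evalWord M.step M.start (List.replicate b false) = f j from rfl, hfij]
    have hacc : M.eval (wordAB a a) ∈ M.accept := by
      apply hyes
      rcases Nat.even_or_odd a with h | h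
      · exact Or.inr ⟨a, h, rfl⟩
      · exact Or.inl ⟨a, h, rfl⟩
    have hrej : M.eval (wordAB b a) ∈ M.reject := by
      apply hno
      rcases Nat.even_or_odd a with h | h
      · exact Or.inl ⟨b, a, hval, Or.inl h, rfl⟩
      · exact Or.inr ⟨b, a, hval, Or.inl h, rfl⟩
    rw [heq] at hacc
    exact Finset.disjoint_left.mp M.disj hacc hrej
end

section
/- Let A = (A_yes, A_no) be a promise problem over a finite alphabet Σ with A_yes ≠ ∅ and A_no ≠ ∅ that can be recognized by a pvDFA. Then max{s(A_yes), s(A_no)} ≤ sr(A) ≤ s(A_yes)·s(A_no) − 1. -/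
/-- `s(L)`: the minimal number of states of a DFA recognizing the language `L`. -/
noncomputable def dfaSize {α : Type} (L : Set (List α)) : ℕ :=
  sInf {n : ℕ | ∃ (δ : Fin n → α → Fin n) (s₀ : Fin n) (F : Finset (Fin n)),
    ∀ w, w ∈ L ↔ evalWord δ s₀ w ∈ F}

/-- `sr(A)`: the minimal number of states of a pvDFA recognizing the promise
problem `(Ayes, Ano)`. -/
noncomputable def srSize {α : Type} (Ayes Ano : Set (List α)) : ℕ :=
  sInf {n : ℕ | ∃ M : PVDFA α n, M.Recognizes Ayes Ano}

/-- `ss(A)`: the minimal number of states of a pvDFA solving the promise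
problem `(Ayes, Ano)`. -/
noncomputable def ssSize {α : Type} (Ayes Ano : Set (List α)) : ℕ :=
  sInf {n : ℕ | ∃ M : PVDFA α n, M.Solves Ayes Ano}

lemma foldl_equiv_eq {α β γ : Type*} (e : β ≃ γ) (f : γ → α → γ) (s : γ) (w : List α) :
    List.foldl (fun t x => e.symm (f (e t) x)) (e.symm s) w = e.symm (List.foldl f s w) := by
  induction w generalizing s with
  | nil => rfl
  | cons x w ih => simp [List.foldl_cons, ih]

/-- for a promise problem `A = (Ayes, Ano)` with nonempty
components that is recognizable by a pvDFA,
`max{s(Ayes), s(Ano)} ≤ sr(A) ≤ s(Ayes)·s(Ano) − 1`. -/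
theorem sr_bounds {α : Type} [Fintype α]
    (Ayes Ano : Set (List α)) (hdisj : Disjoint Ayes Ano)
    (hyes : Ayes.Nonempty) (hno : Ano.Nonempty)
    (hrec : ∃ (n : ℕ) (M : PVDFA α n), M.Recognizes Ayes Ano) :
    max (dfaSize Ayes) (dfaSize Ano) ≤ srSize Ayes Ano ∧
    srSize Ayes Ano ≤ dfaSize Ayes * dfaSize Ano - 1 := by
  classical
  obtain ⟨n₀, M₀, hM₀⟩ := hrec
  -- the defining sets
  set Dyes := {n : ℕ | ∃ (δ : Fin n → α → Fin n) (s₀ : Fin n) (F : Finset (Fin n)),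
    ∀ w, w ∈ Ayes ↔ evalWord δ s₀ w ∈ F} with hDyes
  set Dno := {n : ℕ | ∃ (δ : Fin n → α → Fin n) (s₀ : Fin n) (F : Finset (Fin n)),
    ∀ w, w ∈ Ano ↔ evalWord δ s₀ w ∈ F} with hDno
  set Dr := {n : ℕ | ∃ M : PVDFA α n, M.Recognizes Ayes Ano} with hDr
  have hDrne : Dr.Nonempty := ⟨n₀, M₀, hM₀⟩
  have hDyesne : Dyes.Nonempty := ⟨n₀, M₀.step, M₀.start, M₀.accept, hM₀.1⟩
  have hDnone : Dno.Nonempty := ⟨n₀, M₀.step, M₀.start, M₀.reject, hM₀.2⟩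
  have hsr : srSize Ayes Ano ∈ Dr := Nat.sInf_mem hDrne
  obtain ⟨M, hM⟩ := hsr
  have hlow : max (dfaSize Ayes) (dfaSize Ano) ≤ srSize Ayes Ano := by
    apply max_le
    · exact Nat.sInf_le ⟨M.step, M.start, M.accept, hM.1⟩
    · exact Nat.sInf_le ⟨M.step, M.start, M.reject, hM.2⟩
  refine ⟨hlow, ?_⟩
  -- minimal DFAs for Ayes and Ano
  set k := dfaSize Ayes with hk
  set m := dfaSize Ano with hm
  have h1mem : k ∈ Dyes := Nat.sInf_mem hDyesne
  have h2mem : m ∈ Dno := Nat.sInf_mem hDnone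
  obtain ⟨δ1, s1, F1, h1⟩ := h1mem
  obtain ⟨δ2, s2, F2, h2⟩ := h2mem
  obtain ⟨wy, hwy⟩ := hyes
  obtain ⟨wn, hwn⟩ := hno
  set a₀ : Fin k := evalWord δ1 s1 wy with ha₀
  set b₀ : Fin m := evalWord δ2 s2 wn with hb₀
  have ha₀F : a₀ ∈ F1 := (h1 wy).1 hwy
  have hb₀F : b₀ ∈ F2 := (h2 wn).1 hwn
  -- the key unreachability fact
  have key : ∀ w : List α, (evalWord δ1 s1 w, evalWord δ2 s2 w) ≠ (a₀, b₀) := by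
    intro w hw
    rw [Prod.mk.injEq] at hw
    have hwA : w ∈ Ayes := (h1 w).2 (by rw [hw.1]; exact ha₀F)
    have hwN : w ∈ Ano := (h2 w).2 (by rw [hw.2]; exact hb₀F)
    exact Set.disjoint_left.mp hdisj hwA hwN
  -- the state space: product minus one dead state
  set S := {p : Fin k × Fin m // p ≠ (a₀, b₀)} with hS
  have hcard : Fintype.card S = k * m - 1 := by
    have : Fintype.card S = Fintype.card (Fin k × Fin m) - Fintype.card {p : Fin k × Fin m // p = (a₀, b₀)} :=
      Fintype.card_subtype_compl _
    simp [this, Fintype.card_subtype_eq]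
  set start0 : S := ⟨(s1, s2), key []⟩ with hstart0
  set stepS : S → α → S := fun p x =>
    if h : (δ1 p.1.1 x, δ2 p.1.2 x) = (a₀, b₀) then start0 else ⟨_, h⟩ with hstepS
  have evalS : ∀ w : List α,
      List.foldl stepS start0 w = ⟨(evalWord δ1 s1 w, evalWord δ2 s2 w), key w⟩ := by
    intro w
    induction w using List.reverseRecOn with
    | nil => rfl
    | append_singleton w x ih =>
      rw [List.foldl_append, List.foldl_cons, List.foldl_nil, ih]
      have hne : (δ1 (evalWord δ1 s1 w) x, δ2 (evalWord δ2 s2 w) x) ≠ (a₀, b₀) := by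
        have := key (w ++ [x])
        simpa [evalWord, List.foldl_append] using this
      simp only [hstepS]
      rw [dif_neg hne]
      apply Subtype.ext
      simp [evalWord, List.foldl_append]
  set N := k * m - 1 with hN
  have e : Fin N ≃ S := (Fintype.equivFinOfCardEq hcard).symm
  set M' : PVDFA α N :=
    { step := fun s x => e.symm (stepS (e s) x)
      start := e.symm start0
      accept := Finset.univ.filter (fun s => (e s).1.1 ∈ F1 ∧ (e s).1.2 ∉ F2)
      reject := Finset.univ.filter (fun s => (e s).1.2 ∈ F2 ∧ (e s).1.1 ∉ F1)
      disj := by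
        rw [Finset.disjoint_left]
        intro s hs hs'
        simp only [Finset.mem_filter] at hs hs'
        exact hs.2.2 hs'.2.1 } with hM'
  have evalM' : ∀ w : List α,
      M'.eval w = e.symm ⟨(evalWord δ1 s1 w, evalWord δ2 s2 w), key w⟩ := by
    intro w
    show List.foldl (fun t x => e.symm (stepS (e t) x)) (e.symm start0) w = _
    rw [foldl_equiv_eq e stepS start0 w, evalS w]
  have hrec' : M'.Recognizes Ayes Ano := by
    constructor
    · intro w
      have : M'.eval w ∈ M'.accept ↔ (evalWord δ1 s1 w ∈ F1 ∧ evalWord δ2 s2 w ∉ F2) := by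
        rw [evalM']
        simp [hM', Finset.mem_filter]
      rw [this, ← h1, ← h2]
      constructor
      · intro hw; exact ⟨hw, fun hn => Set.disjoint_left.mp hdisj hw hn⟩
      · exact fun h => h.1
    · intro w
      have : M'.eval w ∈ M'.reject ↔ (evalWord δ2 s2 w ∈ F2 ∧ evalWord δ1 s1 w ∉ F1) := by
        rw [evalM']
        simp [hM', Finset.mem_filter]
      rw [this, ← h1, ← h2]
      constructor
      · intro hw; exact ⟨hw, fun hn => Set.disjoint_left.mp hdisj hn hw⟩
      · exact fun h => h.1
  exact Nat.sInf_le ⟨M', hrec'⟩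
end

section
/- Let N be a prime and l an integer with 0 < l < N, and let A^{N,l} = (A_yes^{N,l}, A_no^{N,l}) be the promise problem over the unary alphabet {a} with A_yes^{N,l} = {a^{iN} : i ≥ 0} and A_no^{N,l} = {a^{iN+l} : i ≥ 0}. Then sr(A^{N,l}) = N = max{s(A_yes^{N,l}), s(A_no^{N,l})}; in particular the lower bound max{s(A_yes), s(A_no)} ≤ sr(A) is tight. -/
open Function

theorem Function.exists_isPeriodicPt_iterate {α : Type*} [Fintype α] (f : α → α) (x : α) :
    ∃ i d, 0 < d ∧ d ≤ Fintype.card α ∧ IsPeriodicPt f d (f^[i] x) := by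
  obtain ⟨a, b, hab, heq⟩ := Fintype.exists_ne_map_eq_of_card_lt
    (fun j : Fin (Fintype.card α + 1) => f^[j] x) (by simp)
  wlog hlt : a < b generalizing a b
  · exact this b a hab.symm heq.symm (lt_of_le_of_ne (not_lt.mp hlt) hab.symm)
  refine ⟨a, b - a, by omega, by omega, ?_⟩
  change f^[b - a] (f^[a] x) = f^[a] x
  rw [← iterate_add_apply, Nat.sub_add_cancel hlt.le]
  exact heq.symm

theorem Function.IsPeriodicPt.iterate_add_mul_eq {α : Type*} {f : α → α} {x : α} {i d m : ℕ}
    (h : IsPeriodicPt f d (f^[i] x)) (him : i ≤ m) (k : ℕ) : f^[m + k * d] x = f^[m] x := by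
  obtain ⟨t, rfl⟩ := Nat.exists_eq_add_of_le him
  rw [add_comm (i + t), iterate_add_apply, add_comm i t, iterate_add_apply]
  exact ((h.apply_iterate t).const_mul k).eq

theorem exists_add_mul_mod_eq {N d b : ℕ} (hN : N.Prime) (hd : ¬ N ∣ d) (a : ℕ)
    (hb : b < N) : ∃ k, (a + k * d) % N = b := by
  have := Fact.mk hN
  have hd' : (d : ZMod N) ≠ 0 := by rwa [Ne, ZMod.natCast_eq_zero_iff]
  have hcast : ((a + (((b : ZMod N) - a) * (d : ZMod N)⁻¹).val * d : ℕ) : ZMod N) = b := by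
    push_cast
    rw [ZMod.natCast_zmod_val]
    field_simp
    ring
  exact ⟨_, by rw [← ZMod.val_natCast, hcast, ZMod.val_cast_of_lt hb]⟩

theorem evalWord_replicate_unit {n : ℕ} (δ : Fin n → Unit → Fin n) (s : Fin n) (m : ℕ) :
    evalWord δ s (List.replicate m ()) = (fun t => δ t ())^[m] s := by
  induction m generalizing s with
  | zero => rfl
  | succ m ih => exact ih (δ s ())

theorem exists_period_not_dvd_evalWord_replicate {N n : ℕ} (hn : n < N)
    (δ : Fin n → Unit → Fin n) (s : Fin n) : ∃ i d, ¬ N ∣ d ∧ ∀ m, i ≤ m → ∀ k,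
      evalWord δ s (List.replicate (m + k * d) ()) = evalWord δ s (List.replicate m ()) := by
  obtain ⟨i, d, hd, hdn, hper⟩ := exists_isPeriodicPt_iterate (fun t => δ t ()) s
  rw [Fintype.card_fin] at hdn
  refine ⟨i, d, fun hdvd => ?_, fun m him k => ?_⟩
  · exact absurd (Nat.le_of_dvd hd hdvd) (by omega)
  · simp only [evalWord_replicate_unit]
    exact hper.iterate_add_mul_eq him k

def unaryResidueClass (N r : ℕ) : Set (List Unit) :=
  {w | ∃ i : ℕ, w = List.replicate (i * N + r) ()}

theorem mem_unaryResidueClass_iff {N r : ℕ} (hr : r < N) {w : List Unit} :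
    w ∈ unaryResidueClass N r ↔ w.length % N = r := by
  constructor
  · rintro ⟨i, rfl⟩
    simp [Nat.mod_eq_of_lt hr]
  · intro h
    refine ⟨w.length / N, List.eq_replicate_iff.mpr ⟨?_, by simp⟩⟩
    have := Nat.div_add_mod' w.length N
    omega

theorem le_of_recognizes_unaryResidueClass {N r n : ℕ} (hr : r < N)
    (δ : Fin n → Unit → Fin n) (s₀ : Fin n) (F : Finset (Fin n))
    (h : ∀ w, w ∈ unaryResidueClass N r ↔ evalWord δ s₀ w ∈ F) : N ≤ n := by
  by_contra! hn
  obtain ⟨i, d, hd, hper⟩ := exists_period_not_dvd_evalWord_replicate hn δ s₀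
  have hi : i ≤ i * N + r := le_add_right (Nat.le_mul_of_pos_right i (by omega))
  have hmem : List.replicate (i * N + r + 1 * d) () ∈ unaryResidueClass N r :=
    (h _).mpr (hper _ hi 1 ▸ (h _).mp ⟨i, rfl⟩)
  rw [mem_unaryResidueClass_iff hr, List.length_replicate, one_mul, add_assoc,
    Nat.mul_add_mod'] at hmem
  have hmod : r + d ≡ r + 0 [MOD N] := by
    rw [Nat.ModEq, hmem, add_zero, Nat.mod_eq_of_lt hr]
  exact hd (Nat.modEq_zero_iff_dvd.mp (Nat.ModEq.add_left_cancel' r hmod))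

theorem PVDFA.Recognizes.solves {α : Type} {n : ℕ} {M : PVDFA α n} {A B : Set (List α)}
    (h : M.Recognizes A B) : M.Solves A B :=
  ⟨fun w hw => (h.1 w).mp hw, fun w hw => (h.2 w).mp hw⟩

theorem PVDFA.le_of_solves_unaryResidueClass {N a b n : ℕ} (hN : N.Prime) (hb : b < N)
    (M : PVDFA Unit n) (h : M.Solves (unaryResidueClass N a) (unaryResidueClass N b)) :
    N ≤ n := by
  by_contra! hn
  obtain ⟨i, d, hd, hper⟩ := exists_period_not_dvd_evalWord_replicate hn M.step M.start
  obtain ⟨k, hk⟩ := exists_add_mul_mod_eq hN hd (i * N + a) hb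
  have hi : i ≤ i * N + a := le_add_right (Nat.le_mul_of_pos_right i hN.pos)
  have hacc := h.1 _ ⟨i, rfl⟩
  have hrej := h.2 (List.replicate (i * N + a + k * d) ())
    ((mem_unaryResidueClass_iff hb).mpr (by simpa using hk))
  rw [PVDFA.eval, hper _ hi k] at hrej
  exact Finset.disjoint_left.mp M.disj hacc hrej

def cycleStep (N : ℕ) (s : Fin N) (_ : Unit) : Fin N :=
  ⟨(s + 1) % N, Nat.mod_lt _ s.pos⟩

theorem val_evalWord_cycleStep {N : ℕ} (s : Fin N) (w : List Unit) :
    (evalWord (cycleStep N) s w).val = (s + w.length) % N := by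
  induction w generalizing s with
  | nil => simp [evalWord, Nat.mod_eq_of_lt s.isLt]
  | cons c w ih =>
    change (evalWord (cycleStep N) (cycleStep N s c) w).val = _
    rw [ih, cycleStep, Nat.mod_add_mod, List.length_cons]
    ring_nf

theorem cycleStep_recognizes {N r : ℕ} (hr : r < N) (w : List Unit) :
    w ∈ unaryResidueClass N r ↔
      evalWord (cycleStep N) ⟨0, by omega⟩ w ∈ ({⟨r, hr⟩} : Finset (Fin N)) := by
  rw [mem_unaryResidueClass_iff hr, Finset.mem_singleton, Fin.ext_iff, val_evalWord_cycleStep,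
    zero_add]

def cyclePVDFA {N a b : ℕ} (ha : a < N) (hb : b < N) (hab : a ≠ b) : PVDFA Unit N where
  step := cycleStep N
  start := ⟨0, by omega⟩
  accept := {⟨a, ha⟩}
  reject := {⟨b, hb⟩}
  disj := Finset.disjoint_singleton.mpr (Fin.ne_of_val_ne hab)

theorem cyclePVDFA_recognizes {N a b : ℕ} (ha : a < N) (hb : b < N) (hab : a ≠ b) :
    (cyclePVDFA ha hb hab).Recognizes (unaryResidueClass N a) (unaryResidueClass N b) :=
  ⟨cycleStep_recognizes ha, cycleStep_recognizes hb⟩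

/-- for a prime `N` and `0 < l < N`, the promise problem
`A^{N,l} = ({a^{iN}}, {a^{iN+l}})` over the unary alphabet satisfies
`sr(A^{N,l}) = N = max{s(A_yes), s(A_no)}`; in particular the lower bound is
tight. -/
theorem sr_lower_bound_tight (N l : ℕ) (hN : N.Prime) (hl : 0 < l) (hlN : l < N) :
    srSize {w : List Unit | ∃ i : ℕ, w = List.replicate (i * N) ()}
           {w : List Unit | ∃ i : ℕ, w = List.replicate (i * N + l) ()} = N ∧
    max (dfaSize {w : List Unit | ∃ i : ℕ, w = List.replicate (i * N) ()})
        (dfaSize {w : List Unit | ∃ i : ℕ, w = List.replicate (i * N + l) ()}) = N := by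
  change srSize (unaryResidueClass N 0) (unaryResidueClass N l) = N ∧
    max (dfaSize (unaryResidueClass N 0)) (dfaSize (unaryResidueClass N l)) = N
  have hsr : IsLeast {n | ∃ M : PVDFA Unit n,
      M.Recognizes (unaryResidueClass N 0) (unaryResidueClass N l)} N :=
    ⟨⟨_, cyclePVDFA_recognizes hN.pos hlN hl.ne⟩,
      fun _ ⟨M, hM⟩ => M.le_of_solves_unaryResidueClass hN hlN hM.solves⟩
  have hdfa : ∀ r < N, dfaSize (unaryResidueClass N r) = N := fun r hr =>
    IsLeast.csInf_eq ⟨⟨cycleStep N, _, _, cycleStep_recognizes hr⟩,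
      fun _ ⟨δ, s₀, F, h⟩ => le_of_recognizes_unaryResidueClass hr δ s₀ F h⟩
  exact ⟨hsr.csInf_eq, by rw [hdfa 0 hN.pos, hdfa l hlN, max_self]⟩
end

section
/- Let p, q > 2 be integers with gcd(p, q) = 2, and consider A_yes = {a^{ip} : i ≥ 0} and A_no = {a^{iq+1} : i ≥ 0} over the unary alphabet {a}. Then A_yes ∩ A_no = ∅ (so A = (A_yes, A_no) is a promise problem), s(A_yes) = p, s(A_no) = q, and sr(A) = pq/2 = (1/2)·s(A_yes)·s(A_no). -/
lemma list_unit_eq (w : List Unit) : w = List.replicate w.length () := by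
  induction w with
  | nil => rfl
  | cons a t ih => cases a; simpa [List.replicate_succ] using ih

lemma evalWord_replicate' {n : ℕ} (δ : Fin n → Unit → Fin n) (s : Fin n) (k : ℕ) :
    List.foldl δ s (List.replicate k ()) = (fun t => δ t ())^[k] s := by
  induction k generalizing s with
  | zero => rfl
  | succ k ih =>
      rw [List.replicate_succ, List.foldl_cons, ih, Function.iterate_succ_apply]

def cyc {m : ℕ} (hm : 0 < m) : Fin m → Fin m := fun t => ⟨(t.val + 1) % m, Nat.mod_lt _ hm⟩

lemma cyc_iter {m : ℕ} (hm : 0 < m) (k : ℕ) : ((cyc hm)^[k] ⟨0, hm⟩).val = k % m := by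
  induction k with
  | zero => simp
  | succ k ih =>
      rw [Function.iterate_succ_apply']
      show ((((cyc hm)^[k] ⟨0, hm⟩)).val + 1) % m = _
      rw [ih, Nat.mod_add_mod]

lemma exists_period {n : ℕ} (f : Fin n → Fin n) (s : Fin n) :
    ∃ d i : ℕ, 0 < d ∧ d ≤ n ∧ ∀ k, i ≤ k → f^[k + d] s = f^[k] s := by
  have key : ∀ i j : ℕ, i < j → j ≤ n → f^[i] s = f^[j] s →
      ∃ d i : ℕ, 0 < d ∧ d ≤ n ∧ ∀ k, i ≤ k → f^[k + d] s = f^[k] s := by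
    intro i j hij hjn heq
    refine ⟨j - i, i, by omega, by omega, ?_⟩
    intro k hk
    have h1 : k + (j - i) = (k - i) + j := by omega
    rw [h1, Function.iterate_add_apply, ← heq, ← Function.iterate_add_apply]
    congr 1
    omega
  have hcard : Fintype.card (Fin n) < Fintype.card (Fin (n + 1)) := by simp
  obtain ⟨a, b, hne, heq⟩ :=
    Fintype.exists_ne_map_eq_of_card_lt (fun k : Fin (n + 1) => f^[k.val] s) hcard
  have hval : a.val ≠ b.val := fun h => hne (Fin.ext h)
  rcases Nat.lt_or_ge a.val b.val with h | h
  · exact key a.val b.val h (by omega) heq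
  · exact key b.val a.val (by omega) (by omega) heq.symm

lemma mem_yes {p : ℕ} (k : ℕ) :
    (∃ i : ℕ, List.replicate k () = List.replicate (i * p) ()) ↔ p ∣ k := by
  constructor
  · rintro ⟨i, h⟩
    have hk : k = i * p := by simpa using congrArg List.length h
    exact hk ▸ dvd_mul_left p i
  · rintro ⟨c, rfl⟩
    exact ⟨c, by rw [Nat.mul_comm]⟩

lemma mem_no {q : ℕ} (hq : 1 < q) (k : ℕ) :
    (∃ i : ℕ, List.replicate k () = List.replicate (i * q + 1) ()) ↔ k % q = 1 := by
  constructor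
  · rintro ⟨i, h⟩
    have hk : k = i * q + 1 := by simpa using congrArg List.length h
    rw [hk, Nat.mul_comm, Nat.mul_add_mod]
    exact Nat.mod_eq_of_lt hq
  · intro h
    refine ⟨k / q, ?_⟩
    congr 1
    have h5 := Nat.div_add_mod k q
    rw [h] at h5
    rw [Nat.mul_comm]
    exact h5.symm

lemma dvd_d_yes {n p i d : ℕ} (hp : 0 < p) (f : Fin n → Fin n) (s : Fin n) (P : Fin n → Prop)
    (hiff : ∀ k, p ∣ k ↔ P (f^[k] s))
    (hper : ∀ k, i ≤ k → f^[k + d] s = f^[k] s) : p ∣ d := by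
  have h1 : P (f^[i * p] s) := (hiff _).mp (dvd_mul_left p i)
  have hle : i ≤ i * p := Nat.le_mul_of_pos_right i hp
  have h2 : P (f^[i * p + d] s) := by rw [hper _ hle]; exact h1
  exact (Nat.dvd_add_right (dvd_mul_left p i)).mp ((hiff _).mpr h2)

lemma dvd_d_no {n q i d : ℕ} (hq : 1 < q) (f : Fin n → Fin n) (s : Fin n) (P : Fin n → Prop)
    (hiff : ∀ k, k % q = 1 ↔ P (f^[k] s))
    (hper : ∀ k, i ≤ k → f^[k + d] s = f^[k] s) : q ∣ d := by
  have hm1 : (i * q + 1) % q = 1 := by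
    rw [Nat.mul_comm, Nat.mul_add_mod]; exact Nat.mod_eq_of_lt hq
  have h1 : P (f^[i * q + 1] s) := (hiff _).mp hm1
  have hle : i ≤ i * q + 1 :=
    le_trans (Nat.le_mul_of_pos_right i (by omega)) (Nat.le_succ _)
  have h2 : P (f^[i * q + 1 + d] s) := by rw [hper _ hle]; exact h1
  have h3 : (i * q + 1 + d) % q = 1 := (hiff _).mpr h2
  have h4 : (1 + d) % q = 1 := by
    rw [show i * q + 1 + d = q * i + (1 + d) by ring, Nat.mul_add_mod] at h3
    exact h3
  have h5 := Nat.div_add_mod (1 + d) q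
  rw [h4, Nat.add_comm] at h5
  exact ⟨(1 + d) / q, (Nat.add_left_cancel h5).symm⟩

lemma evalWord_replicate {n : ℕ} (δ : Fin n → Unit → Fin n) (s : Fin n) (k : ℕ) :
    evalWord δ s (List.replicate k ()) = (fun t => δ t ())^[k] s :=
  evalWord_replicate' δ s k

/-- for integers `p, q > 2` with `gcd(p, q) = 2`, the promise
problem `A = ({a^{ip}}, {a^{iq+1}})` over the unary alphabet is well defined
(its components are disjoint), `s(A_yes) = p`, `s(A_no) = q`, and
`sr(A) = pq/2 = (1/2)·s(A_yes)·s(A_no)`. -/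
theorem sr_half_product (p q : ℕ) (hp : 2 < p) (hq : 2 < q)
    (hgcd : Nat.gcd p q = 2) :
    ({w : List Unit | ∃ i : ℕ, w = List.replicate (i * p) ()} ∩
       {w : List Unit | ∃ i : ℕ, w = List.replicate (i * q + 1) ()} = ∅) ∧
    dfaSize {w : List Unit | ∃ i : ℕ, w = List.replicate (i * p) ()} = p ∧
    dfaSize {w : List Unit | ∃ i : ℕ, w = List.replicate (i * q + 1) ()} = q ∧
    srSize {w : List Unit | ∃ i : ℕ, w = List.replicate (i * p) ()}
           {w : List Unit | ∃ i : ℕ, w = List.replicate (i * q + 1) ()} = p * q / 2 := by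
  have hp0 : 0 < p := by omega
  have hq0 : 0 < q := by omega
  have hq1 : 1 < q := by omega
  have h2p : 2 ∣ p := hgcd ▸ Nat.gcd_dvd_left p q
  have h2q : 2 ∣ q := hgcd ▸ Nat.gcd_dvd_right p q
  refine ⟨?_, ?_, ?_, ?_⟩
  -- Part 1: disjointness
  · ext w
    simp only [Set.mem_inter_iff, Set.mem_setOf_eq, Set.mem_empty_iff_false, iff_false,
      not_and]
    rintro ⟨i, hi⟩ ⟨j, hj⟩
    rw [hi] at hj
    have hlen : i * p = j * q + 1 := by simpa using congrArg List.length hj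
    obtain ⟨x, hx⟩ : 2 ∣ i * p := h2p.mul_left i
    obtain ⟨y, hy⟩ : 2 ∣ j * q := h2q.mul_left j
    rw [hx, hy] at hlen
    omega
  -- Part 2: dfaSize yes = p
  · have memp : p ∈ {n : ℕ | ∃ (δ : Fin n → Unit → Fin n) (s₀ : Fin n) (F : Finset (Fin n)),
        ∀ w, w ∈ {w : List Unit | ∃ i : ℕ, w = List.replicate (i * p) ()} ↔
          evalWord δ s₀ w ∈ F} := by
      refine ⟨fun t _ => cyc hp0 t, ⟨0, hp0⟩, Finset.univ.filter (fun t => t.val = 0), ?_⟩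
      intro w
      rw [list_unit_eq w]
      generalize w.length = k
      simp only [Set.mem_setOf_eq, Finset.mem_filter, Finset.mem_univ, true_and]
      rw [mem_yes, evalWord_replicate]
      show p ∣ k ↔ ((cyc hp0)^[k] ⟨0, hp0⟩).val = 0
      rw [cyc_iter hp0 k]
      exact Nat.dvd_iff_mod_eq_zero
    refine le_antisymm (Nat.sInf_le memp) (le_csInf ⟨p, memp⟩ ?_)
    rintro n ⟨δ, s₀, F, hF⟩
    obtain ⟨d, i, hd0, hdn, hper⟩ := exists_period (fun t => δ t ()) s₀
    have hiff : ∀ k, p ∣ k ↔ ((fun t => δ t ())^[k] s₀ ∈ F) := by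
      intro k
      have h := hF (List.replicate k ())
      rw [evalWord_replicate] at h
      simp only [Set.mem_setOf_eq] at h
      exact (mem_yes k).symm.trans h
    exact le_trans (Nat.le_of_dvd hd0 (dvd_d_yes hp0 _ _ _ hiff hper)) hdn
  -- Part 3: dfaSize no = q
  · have memq : q ∈ {n : ℕ | ∃ (δ : Fin n → Unit → Fin n) (s₀ : Fin n) (F : Finset (Fin n)),
        ∀ w, w ∈ {w : List Unit | ∃ i : ℕ, w = List.replicate (i * q + 1) ()} ↔
          evalWord δ s₀ w ∈ F} := by
      refine ⟨fun t _ => cyc hq0 t, ⟨0, hq0⟩, Finset.univ.filter (fun t => t.val = 1), ?_⟩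
      intro w
      rw [list_unit_eq w]
      generalize w.length = k
      simp only [Set.mem_setOf_eq, Finset.mem_filter, Finset.mem_univ, true_and]
      rw [mem_no hq1, evalWord_replicate]
      show k % q = 1 ↔ ((cyc hq0)^[k] ⟨0, hq0⟩).val = 1
      rw [cyc_iter hq0 k]
    refine le_antisymm (Nat.sInf_le memq) (le_csInf ⟨q, memq⟩ ?_)
    rintro n ⟨δ, s₀, F, hF⟩
    obtain ⟨d, i, hd0, hdn, hper⟩ := exists_period (fun t => δ t ()) s₀
    have hiff : ∀ k, k % q = 1 ↔ ((fun t => δ t ())^[k] s₀ ∈ F) := by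
      intro k
      have h := hF (List.replicate k ())
      rw [evalWord_replicate] at h
      simp only [Set.mem_setOf_eq] at h
      exact (mem_no hq1 k).symm.trans h
    exact le_trans (Nat.le_of_dvd hd0 (dvd_d_no hq1 _ _ _ hiff hper)) hdn
  -- Part 4: srSize = p*q/2
  · have hlcm : Nat.lcm p q = p * q / 2 := by
      rw [Nat.lcm, hgcd]
    set m := Nat.lcm p q with hm
    have hm0 : 0 < m := Nat.lcm_pos hp0 hq0
    have hpm : p ∣ m := Nat.dvd_lcm_left p q
    have hqm : q ∣ m := Nat.dvd_lcm_right p q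
    have hdisj : Disjoint (Finset.univ.filter fun t : Fin m => t.val % p = 0)
        (Finset.univ.filter fun t : Fin m => t.val % q = 1) := by
      rw [Finset.disjoint_left]
      intro t ht1 ht2
      simp only [Finset.mem_filter, Finset.mem_univ, true_and] at ht1 ht2
      obtain ⟨x, hx⟩ : 2 ∣ t.val := dvd_trans h2p (Nat.dvd_of_mod_eq_zero ht1)
      obtain ⟨y, hy⟩ : 2 ∣ q * (t.val / q) := h2q.mul_right _
      have e2 := Nat.div_add_mod t.val q
      rw [ht2, hy, hx] at e2
      omega
    have memm : m ∈ {n : ℕ | ∃ M : PVDFA Unit n,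
        M.Recognizes {w : List Unit | ∃ i : ℕ, w = List.replicate (i * p) ()}
          {w : List Unit | ∃ i : ℕ, w = List.replicate (i * q + 1) ()}} := by
      refine ⟨⟨fun t _ => cyc hm0 t, ⟨0, hm0⟩,
        Finset.univ.filter (fun t => t.val % p = 0),
        Finset.univ.filter (fun t => t.val % q = 1), hdisj⟩, ?_, ?_⟩
      · intro w
        rw [list_unit_eq w]
        generalize w.length = k
        simp only [Set.mem_setOf_eq, PVDFA.eval, Finset.mem_filter, Finset.mem_univ, true_and]
        rw [mem_yes, evalWord_replicate]
        show p ∣ k ↔ ((cyc hm0)^[k] ⟨0, hm0⟩).val % p = 0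
        rw [cyc_iter hm0 k, Nat.mod_mod_of_dvd k hpm]
        exact Nat.dvd_iff_mod_eq_zero
      · intro w
        rw [list_unit_eq w]
        generalize w.length = k
        simp only [Set.mem_setOf_eq, PVDFA.eval, Finset.mem_filter, Finset.mem_univ, true_and]
        rw [mem_no hq1, evalWord_replicate]
        show k % q = 1 ↔ ((cyc hm0)^[k] ⟨0, hm0⟩).val % q = 1
        rw [cyc_iter hm0 k, Nat.mod_mod_of_dvd k hqm]
    rw [← hlcm]
    refine le_antisymm (Nat.sInf_le memm) (le_csInf ⟨m, memm⟩ ?_)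
    rintro n ⟨M, hy, hn⟩
    obtain ⟨d, i, hd0, hdn, hper⟩ := exists_period (fun t => M.step t ()) M.start
    have hiffp : ∀ k, p ∣ k ↔ ((fun t => M.step t ())^[k] M.start ∈ M.accept) := by
      intro k
      have h := hy (List.replicate k ())
      simp only [Set.mem_setOf_eq, PVDFA.eval] at h
      rw [evalWord_replicate] at h
      exact (mem_yes k).symm.trans h
    have hiffq : ∀ k, k % q = 1 ↔ ((fun t => M.step t ())^[k] M.start ∈ M.reject) := by
      intro k
      have h := hn (List.replicate k ())
      simp only [Set.mem_setOf_eq, PVDFA.eval] at h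
      rw [evalWord_replicate] at h
      exact (mem_no hq1 k).symm.trans h
    have hpd : p ∣ d := dvd_d_yes hp0 _ _ _ hiffp hper
    have hqd : q ∣ d := dvd_d_no hq1 _ _ _ hiffq hper
    exact le_trans (Nat.le_of_dvd hd0 (Nat.lcm_dvd hpd hqd)) hdn
end

section
/- Let l be a positive integer such that cos(√2·π·l) ≤ 0, and let A^l = (A_yes^l, A_no^l) be the promise problem over the alphabet {a, b} with A_yes^l = {w ∈ {a,b}* : #_a(w) = #_b(w)} and A_no^l = {w ∈ {a,b}* : #_a(w) + l = #_b(w)}, where #_σ(w) denotes the number of occurrences of σ in w. Then A^l can be recognized exactly by a pvMO-1QFA with 3 quantum basis states, but A^l cannot be recognized by any pvDFA. -/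
/-- The first standard basis vector `e₀` of `ℂⁿ`, the initial quantum state. -/
def qInit (n : ℕ) : Fin n → ℂ := fun i => if i.val = 0 then 1 else 0

/-- The total matrix applied by an MO-1QFA on input `w`:
`U_$ · U_{σ_m} ⋯ U_{σ_1} · U_¢`. -/
noncomputable def qfaMatrix {α : Type} {n : ℕ} (Uc Ud : Matrix (Fin n) (Fin n) ℂ)
    (U : α → Matrix (Fin n) (Fin n) ℂ) (w : List α) : Matrix (Fin n) (Fin n) ℂ :=
  Ud * w.foldl (fun M σ => U σ * M) Uc

/-- `‖P_Q v‖²`: the probability of observing an outcome in `Q` when measuring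
the vector `v` in the standard basis. -/
noncomputable def probOn {n : ℕ} (Q : Finset (Fin n)) (v : Fin n → ℂ) : ℝ :=
  ∑ i ∈ Q, ‖v i‖ ^ 2

/-- `A_yes^l`: words over `{a, b}` (with `a = false`, `b = true`) having equally
many `a`'s and `b`'s. -/
def AyesQ (_l : ℕ) : Set (List Bool) := {w | w.count false = w.count true}

/-- `A_no^l`: words over `{a, b}` with `#_a(w) + l = #_b(w)`. -/
def AnoQ (l : ℕ) : Set (List Bool) := {w | w.count false + l = w.count true}


/-!
The automaton keeps a real vector `(a, 0, b)` and rotates its first two coordinates by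
`θ = √2·π` on each `a` and by `-θ` on each `b`, so after reading `w` it holds
`(a cos ψ, a sin ψ, b)` with `ψ = θ·(#_a(w) - #_b(w))`. The end-marker unitary measures the
overlap with `(a, 0, b)` in basis state 0 and with `(a cos θl, -a sin θl, b)` in basis state 1;
these two vectors are orthogonal once `a² = 1 / (1 - cos θl)`, which needs `cos θl ≤ 0`.
The amplitudes are `a² cos ψ + b²` and `a² cos (ψ + θl) + b²`, of modulus one only when the
cosine is `±1`, i.e. when `√2` times an integer is an integer: by irrationality only for
`ψ = 0` resp. `ψ = -θl`. A pvDFA fails by pigeonhole: two prefixes `a^i`, `a^j` with `i ≠ j`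
reach the same state, so `a^i b^i` and `a^j b^i` are both accepted.
-/

open Matrix

noncomputable section

def planeRotation (φ : ℝ) : Matrix (Fin 3) (Fin 3) ℂ :=
  !![(Real.cos φ : ℂ), -(Real.sin φ : ℂ), 0;
     (Real.sin φ : ℂ), (Real.cos φ : ℂ), 0;
     0, 0, 1]

lemma planeRotation_mul_planeRotation (φ ψ : ℝ) :
    planeRotation φ * planeRotation ψ = planeRotation (φ + ψ) := by
  ext i j
  fin_cases i <;> fin_cases j <;>
    simp [planeRotation, Matrix.mul_apply, Fin.sum_univ_three, Real.cos_add, Real.sin_add,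
      -Complex.ofReal_cos, -Complex.ofReal_sin] <;>
    push_cast <;> ring

lemma planeRotation_zero : planeRotation 0 = 1 := by
  ext i j
  fin_cases i <;> fin_cases j <;> simp [planeRotation]

lemma star_planeRotation (φ : ℝ) : star (planeRotation φ) = planeRotation (-φ) := by
  ext i j
  fin_cases i <;> fin_cases j <;>
    simp [planeRotation, Matrix.star_apply, -Complex.ofReal_cos, -Complex.ofReal_sin]

lemma planeRotation_mem_unitaryGroup (φ : ℝ) :
    planeRotation φ ∈ Matrix.unitaryGroup (Fin 3) ℂ := by
  rw [Matrix.mem_unitaryGroup_iff, star_planeRotation, planeRotation_mul_planeRotation,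
    add_neg_cancel, planeRotation_zero]

lemma foldl_planeRotation_mul {α : Type*} (f : α → ℝ) (w : List α)
    (N : Matrix (Fin 3) (Fin 3) ℂ) :
    w.foldl (fun M σ => planeRotation (f σ) * M) N = planeRotation (w.map f).sum * N := by
  induction w generalizing N with
  | nil => simp [planeRotation_zero]
  | cons σ w ih =>
    rw [List.foldl_cons, ih, ← mul_assoc, planeRotation_mul_planeRotation, List.map_cons,
      List.sum_cons, add_comm]

section Unitaries

variable {a b : ℝ}

def initUnitary (a b : ℝ) : Matrix (Fin 3) (Fin 3) ℂ :=
  !![(a : ℂ), 0, -(b : ℂ);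
     0, 1, 0;
     (b : ℂ), 0, (a : ℂ)]

-- The last row is the cross product of the first two, which are orthonormal
-- exactly when `a² cos φ + b² = 0`.
def finalUnitary (a b φ : ℝ) : Matrix (Fin 3) (Fin 3) ℂ :=
  !![(a : ℂ), 0, (b : ℂ);
     (a * Real.cos φ : ℝ), (-(a * Real.sin φ) : ℝ), (b : ℂ);
     (a * b * Real.sin φ : ℝ), (a * b * (Real.cos φ - 1) : ℝ), (-(a ^ 2 * Real.sin φ) : ℝ)]

lemma initUnitary_mem_unitaryGroup (hab : a ^ 2 + b ^ 2 = 1) :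
    initUnitary a b ∈ Matrix.unitaryGroup (Fin 3) ℂ := by
  rw [Matrix.mem_unitaryGroup_iff]
  ext i j
  fin_cases i <;> fin_cases j <;>
    simp [initUnitary, Matrix.mul_apply, Fin.sum_univ_three, Matrix.star_apply] <;>
    norm_cast <;> linarith

lemma finalUnitary_mem_unitaryGroup {φ : ℝ} (hab : a ^ 2 + b ^ 2 = 1)
    (horth : a ^ 2 * Real.cos φ + b ^ 2 = 0) :
    finalUnitary a b φ ∈ Matrix.unitaryGroup (Fin 3) ℂ := by
  have hφ := Real.sin_sq_add_cos_sq φ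
  rw [Matrix.mem_unitaryGroup_iff]
  ext i j
  fin_cases i <;> fin_cases j <;>
    simp [finalUnitary, Matrix.mul_apply, Fin.sum_univ_three, Matrix.star_apply,
      -Complex.ofReal_cos, -Complex.ofReal_sin] <;>
    norm_cast <;>
    (first
      | linarith
      | linear_combination a ^ 2 * hφ + hab
      | linear_combination (a ^ 2 * b ^ 2 + a ^ 4) * hφ
          + 2 * a ^ 2 * (1 - Real.cos φ) * horth + (a ^ 2 * (1 - Real.cos φ) + 1) * (hab - horth))

lemma planeRotation_mul_initUnitary_mulVec (ψ : ℝ) :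
    (planeRotation ψ * initUnitary a b) *ᵥ qInit 3
      = ![((a * Real.cos ψ : ℝ) : ℂ), (a * Real.sin ψ : ℝ), b] := by
  ext i
  fin_cases i <;>
    simp [planeRotation, initUnitary, qInit, Matrix.mulVec, dotProduct, Matrix.mul_apply,
      Fin.sum_univ_three, -Complex.ofReal_cos, -Complex.ofReal_sin] <;>
    push_cast <;> ring

lemma finalUnitary_mulVec_zero (φ ψ : ℝ) :
    (finalUnitary a b φ *ᵥ ![((a * Real.cos ψ : ℝ) : ℂ), (a * Real.sin ψ : ℝ), b]) 0
      = (a ^ 2 * Real.cos ψ + b ^ 2 : ℝ) := by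
  simp [finalUnitary, Matrix.mulVec, dotProduct, Fin.sum_univ_three,
    -Complex.ofReal_cos, -Complex.ofReal_sin]
  push_cast; ring

lemma finalUnitary_mulVec_one (φ ψ : ℝ) :
    (finalUnitary a b φ *ᵥ ![((a * Real.cos ψ : ℝ) : ℂ), (a * Real.sin ψ : ℝ), b]) 1
      = (a ^ 2 * Real.cos (ψ + φ) + b ^ 2 : ℝ) := by
  simp [finalUnitary, Matrix.mulVec, dotProduct, Fin.sum_univ_three, Real.cos_add,
    -Complex.ofReal_cos, -Complex.ofReal_sin]
  push_cast; ring

end Unitaries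

lemma sq_eq_one_of_sq_mul_add_sq_eq_one {a b x : ℝ} (hab : a ^ 2 + b ^ 2 = 1) (ha : a ≠ 0)
    (hx : |x| ≤ 1) (h : (a ^ 2 * x + b ^ 2) ^ 2 = 1) : x ^ 2 = 1 := by
  have ha2 : 0 < a ^ 2 := by positivity
  obtain ⟨hx₁, hx₂⟩ := abs_le.mp hx
  suffices x = 1 ∨ x = -1 by rcases this with rfl | rfl <;> norm_num
  have hfac : (a ^ 2 * x + b ^ 2 - 1) * (a ^ 2 * x + b ^ 2 + 1) = 0 := by linear_combination h
  rcases mul_eq_zero.mp hfac with h₁ | h₁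
  · left
    have : a ^ 2 * (x - 1) = 0 := by linear_combination h₁ - hab
    linarith [(mul_eq_zero.mp this).resolve_left ha2.ne']
  · right
    nlinarith

lemma eq_zero_of_cos_sqrt_two_mul_pi_mul_sq_eq_one {m : ℤ}
    (h : Real.cos (Real.sqrt 2 * Real.pi * m) ^ 2 = 1) : m = 0 := by
  have hsin : Real.sin (Real.sqrt 2 * Real.pi * m) = 0 := by
    have := Real.sin_sq_add_cos_sq (Real.sqrt 2 * Real.pi * m)
    exact pow_eq_zero_iff two_ne_zero |>.mp (by linarith)
  obtain ⟨k, hk⟩ := Real.sin_eq_zero_iff.mp hsin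
  have hk' : (k : ℝ) = m * Real.sqrt 2 := by
    apply mul_right_cancel₀ Real.pi_ne_zero
    linear_combination hk
  by_contra hm
  exact Int.not_irrational k (hk' ▸ irrational_sqrt_two.intCast_mul hm)

lemma sq_mul_cos_sqrt_two_mul_pi_add_sq_sq_eq_one_iff {a b : ℝ} (hab : a ^ 2 + b ^ 2 = 1)
    (ha : a ≠ 0) (m : ℤ) :
    (a ^ 2 * Real.cos (Real.sqrt 2 * Real.pi * m) + b ^ 2) ^ 2 = 1 ↔ m = 0 := by
  refine ⟨fun h => eq_zero_of_cos_sqrt_two_mul_pi_mul_sq_eq_one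
    (sq_eq_one_of_sq_mul_add_sq_eq_one hab ha (Real.abs_cos_le_one _) h), ?_⟩
  rintro rfl
  simp [hab]

lemma sum_map_ite_neg (θ : ℝ) (w : List Bool) :
    (w.map fun σ => if σ then -θ else θ).sum
      = θ * ((w.count false - w.count true : ℤ) : ℝ) := by
  induction w with
  | nil => simp
  | cons σ w ih => cases σ <;> simp [ih] <;> ring

lemma qfaMatrix_planeRotation_mulVec (a b φ θ : ℝ) (w : List Bool) :
    qfaMatrix (initUnitary a b) (finalUnitary a b φ)
        (fun σ => planeRotation (if σ then -θ else θ)) w *ᵥ qInit 3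
      = finalUnitary a b φ *ᵥ
          ![((a * Real.cos (θ * (w.count false - w.count true : ℤ)) : ℝ) : ℂ),
            (a * Real.sin (θ * (w.count false - w.count true : ℤ)) : ℝ), b] := by
  rw [qfaMatrix, foldl_planeRotation_mul, sum_map_ite_neg, ← Matrix.mulVec_mulVec,
    planeRotation_mul_initUnitary_mulVec]

lemma probOn_singleton {n : ℕ} (i : Fin n) (v : Fin n → ℂ) : probOn {i} v = ‖v i‖ ^ 2 := by
  simp [probOn]

lemma exists_exact_qfa (l : ℕ) (hcos : Real.cos (Real.sqrt 2 * Real.pi * l) ≤ 0) :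
    ∃ (Uc Ud : Matrix (Fin 3) (Fin 3) ℂ) (U : Bool → Matrix (Fin 3) (Fin 3) ℂ),
      Uc ∈ Matrix.unitaryGroup (Fin 3) ℂ ∧ Ud ∈ Matrix.unitaryGroup (Fin 3) ℂ ∧
      (∀ σ, U σ ∈ Matrix.unitaryGroup (Fin 3) ℂ) ∧
      ∃ (Qa Qr : Finset (Fin 3)), Disjoint Qa Qr ∧
        ∀ w : List Bool,
          (w ∈ AyesQ l ↔ probOn Qa ((qfaMatrix Uc Ud U w).mulVec (qInit 3)) = 1) ∧
          (w ∈ AnoQ l ↔ probOn Qr ((qfaMatrix Uc Ud U w).mulVec (qInit 3)) = 1) := by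
  set θ := Real.sqrt 2 * Real.pi
  set φ := θ * l
  set p := 1 / (1 - Real.cos φ)
  have hp₀ : 0 < p := one_div_pos.mpr (by linarith)
  have hp : p * (1 - Real.cos φ) = 1 := one_div_mul_cancel (by linarith)
  have hp₁ : p ≤ 1 := (div_le_one (by linarith)).mpr (by linarith)
  set a := Real.sqrt p
  set b := Real.sqrt (1 - p)
  have ha : a ≠ 0 := (Real.sqrt_pos.mpr hp₀).ne'
  have hab : a ^ 2 + b ^ 2 = 1 := by
    rw [Real.sq_sqrt hp₀.le, Real.sq_sqrt (by linarith)]; ring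
  have horth : a ^ 2 * Real.cos φ + b ^ 2 = 0 := by
    rw [Real.sq_sqrt hp₀.le, Real.sq_sqrt (by linarith)]
    linear_combination -hp
  refine ⟨initUnitary a b, finalUnitary a b φ, fun σ => planeRotation (if σ then -θ else θ),
    initUnitary_mem_unitaryGroup hab, finalUnitary_mem_unitaryGroup hab horth,
    fun σ => planeRotation_mem_unitaryGroup _, {0}, {1}, by decide, fun w => ?_⟩
  set k : ℤ := w.count false - w.count true
  have hyes : w ∈ AyesQ l ↔ k = 0 := by simp only [AyesQ, Set.mem_ofPred_eq]; omega
  have hno : w ∈ AnoQ l ↔ k + l = 0 := by simp only [AnoQ, Set.mem_ofPred_eq]; omega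
  rw [hyes, hno, qfaMatrix_planeRotation_mulVec, probOn_singleton, probOn_singleton,
    finalUnitary_mulVec_zero, finalUnitary_mulVec_one, Complex.norm_real, Complex.norm_real,
    Real.norm_eq_abs, Real.norm_eq_abs, sq_abs, sq_abs,
    show θ * k + φ = θ * ((k + l : ℤ) : ℝ) by push_cast; ring]
  exact ⟨(sq_mul_cos_sqrt_two_mul_pi_add_sq_sq_eq_one_iff hab ha k).symm,
    (sq_mul_cos_sqrt_two_mul_pi_add_sq_sq_eq_one_iff hab ha (k + l)).symm⟩

namespace PVDFA

lemma eval_append_eq_of_eval_eq {α : Type} {n : ℕ} (M : PVDFA α n) {u v : List α}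
    (h : M.eval u = M.eval v) (x : List α) :
    M.eval (u ++ x) = M.eval (v ++ x) := by
  simp only [eval, evalWord, List.foldl_append] at h ⊢
  rw [h]

lemma exists_ne_eval_replicate_eq {α : Type} {n : ℕ} (M : PVDFA α n) (σ : α) :
    ∃ i j, i ≠ j ∧ M.eval (List.replicate i σ) = M.eval (List.replicate j σ) := by
  obtain ⟨i, j, hij, h⟩ := Fintype.exists_ne_map_eq_of_card_lt
    (fun i : Fin (n + 1) => M.eval (List.replicate i σ)) (by simp)
  exact ⟨i, j, Fin.val_injective.ne hij, h⟩

theorem not_recognizes_balanced {n : ℕ} (M : PVDFA Bool n) (l : ℕ) (Ano : Set (List Bool)) :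
    ¬ M.Recognizes (AyesQ l) Ano := by
  rintro ⟨hyes, -⟩
  obtain ⟨i, j, hij, h⟩ := M.exists_ne_eval_replicate_eq false
  have hbal : ∀ k, List.replicate k false ++ List.replicate i true ∈ AyesQ l ↔ k = i := by
    simp [AyesQ, List.count_replicate]
  have hacc := (hyes _).mp ((hbal i).mpr rfl)
  rw [← M.eval_append_eq_of_eval_eq h.symm] at hacc
  exact hij ((hbal j).mp ((hyes _).mpr hacc)).symm

end PVDFA

end

theorem qfa_recognizes_but_no_dfa_general (l : ℕ)
    (hcos : Real.cos (Real.sqrt 2 * Real.pi * l) ≤ 0) :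
    (∃ (Uc Ud : Matrix (Fin 3) (Fin 3) ℂ) (U : Bool → Matrix (Fin 3) (Fin 3) ℂ),
      Uc ∈ Matrix.unitaryGroup (Fin 3) ℂ ∧ Ud ∈ Matrix.unitaryGroup (Fin 3) ℂ ∧
      (∀ σ, U σ ∈ Matrix.unitaryGroup (Fin 3) ℂ) ∧
      ∃ (Qa Qr : Finset (Fin 3)), Disjoint Qa Qr ∧
        ∀ w : List Bool,
          (w ∈ AyesQ l ↔ probOn Qa ((qfaMatrix Uc Ud U w).mulVec (qInit 3)) = 1) ∧
          (w ∈ AnoQ l ↔ probOn Qr ((qfaMatrix Uc Ud U w).mulVec (qInit 3)) = 1)) ∧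
    ¬ ∃ (n : ℕ) (M : PVDFA Bool n), M.Recognizes (AyesQ l) (AnoQ l) :=
  ⟨exists_exact_qfa l hcos, fun ⟨_, M, hM⟩ => M.not_recognizes_balanced l _ hM⟩

/-- for a positive integer `l` with `cos(√2·π·l) ≤ 0`, the promise
problem `A^l` can be recognized exactly by a pvMO-1QFA with 3 quantum basis
states, but cannot be recognized by any pvDFA. -/
theorem qfa_recognizes_but_no_dfa (l : ℕ) (hl : 0 < l)
    (hcos : Real.cos (Real.sqrt 2 * Real.pi * l) ≤ 0) :
    (∃ (Uc Ud : Matrix (Fin 3) (Fin 3) ℂ) (U : Bool → Matrix (Fin 3) (Fin 3) ℂ),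
      Uc ∈ Matrix.unitaryGroup (Fin 3) ℂ ∧ Ud ∈ Matrix.unitaryGroup (Fin 3) ℂ ∧
      (∀ σ, U σ ∈ Matrix.unitaryGroup (Fin 3) ℂ) ∧
      ∃ (Qa Qr : Finset (Fin 3)), Disjoint Qa Qr ∧
        ∀ w : List Bool,
          (w ∈ AyesQ l ↔ probOn Qa ((qfaMatrix Uc Ud U w).mulVec (qInit 3)) = 1) ∧
          (w ∈ AnoQ l ↔ probOn Qr ((qfaMatrix Uc Ud U w).mulVec (qInit 3)) = 1)) ∧
    ¬ ∃ (n : ℕ) (M : PVDFA Bool n), M.Recognizes (AyesQ l) (AnoQ l) :=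
  qfa_recognizes_but_no_dfa_general l hcos
end

section
/- Let p > 6 be a prime, θ = π/p, and let A(p) = (A_yes(p), A_no(p)) be the promise problem over the unary alphabet {a} with A_yes(p) = {a^k : cos²((k mod p)·θ) ≥ 2/3} and A_no(p) = {a^k : cos²((k mod p)·θ) ≤ 1/3}. Then there exists a PFA with p states (indeed, a deterministic one) solving A(p) exactly, and for every ε with 0 ≤ ε < 1/2, every PFA that solves A(p) with error probability ε has at least p states; that is, the minimal PFA solving A(p) has exactly p states. -/
/-! The `p`-state deterministic automaton counting `k mod p` solves `A(p)` exactly.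

Conversely, let `M` be the transition matrix of a PFA with `n < p` states and `d = n!`. The powers
of the stochastic matrix `M` are bounded, so its eigenvalues of modulus one are semisimple, and
following the positive entries of `M` from a coordinate of maximal modulus of an eigenvector shows
that they are roots of unity of order at most `n`, hence `d`-th roots of unity. On the generalized
eigenspaces of the remaining eigenvalues `M^k` tends to zero, so `M^(k+d) - M^k → 0` and the
acceptance probabilities of `a^k` and `a^(k+td)` become arbitrarily close. Since `p ∤ d`, some `t`
moves a yes-instance `k ≡ 0` to a no-instance `k + td ≡ (p-1)/2 (mod p)`, which is impossible
for error `ε < 1/2`. -/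

/-- A one-way probabilistic finite automaton (PFA) with `n` states over the
unary alphabet `{a}` solves the promise problem `(Ayes, Ano)` with error
probability `ε`: there are an initial probability distribution `ini`, a
row-stochastic transition matrix `M` and a set `F` of accepting states such
that every yes-instance `a^k` is accepted with probability
`ini · M^k · η_F ≥ 1 − ε` and every no-instance is accepted with probability
`≤ ε`. -/
def PFASolves (n : ℕ) (Ayes Ano : Set (List Unit)) (ε : ℝ) : Prop :=
  ∃ (ini : Fin n → ℝ) (M : Matrix (Fin n) (Fin n) ℝ) (F : Finset (Fin n)),
    (∀ i, 0 ≤ ini i) ∧ (∑ i, ini i = 1) ∧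
    (∀ i j, 0 ≤ M i j) ∧ (∀ i, ∑ j, M i j = 1) ∧
    (∀ w ∈ Ayes, 1 - ε ≤ ∑ i ∈ F, Matrix.vecMul ini (M ^ w.length) i) ∧
    (∀ w ∈ Ano, ∑ i ∈ F, Matrix.vecMul ini (M ^ w.length) i ≤ ε)

/-- `A_yes(p) = {a^k : cos²((k mod p)·π/p) ≥ 2/3}`. -/
def AyesP (p : ℕ) : Set (List Unit) :=
  {w | (2 : ℝ) / 3 ≤ Real.cos ((w.length % p : ℕ) * (Real.pi / p)) ^ 2}

/-- `A_no(p) = {a^k : cos²((k mod p)·π/p) ≤ 1/3}`. -/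
def AnoP (p : ℕ) : Set (List Unit) :=
  {w | Real.cos ((w.length % p : ℕ) * (Real.pi / p)) ^ 2 ≤ (1 : ℝ) / 3}

open Filter Finset Matrix Topology
open scoped Nat

lemma eq_zero_of_forall_norm_add_nsmul_le {E : Type*} [NormedAddCommGroup E] [NormedSpace ℝ E]
    {a b : E} {C : ℝ} (h : ∀ k : ℕ, ‖a + k • b‖ ≤ C) : b = 0 := by
  by_contra hb
  obtain ⟨k, hk⟩ := exists_nat_gt ((C + ‖a‖) / ‖b‖)
  have hbound : k * ‖b‖ ≤ C + ‖a‖ := by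
    have := norm_sub_le (a + k • b) a
    rw [add_sub_cancel_left, RCLike.norm_nsmul ℝ, nsmul_eq_mul] at this
    linarith [h k]
  rw [div_lt_iff₀ (norm_pos_iff.mpr hb)] at hk
  linarith

lemma pow_factorial_eq_one_of_pow_eq_pow {G₀ : Type*} [GroupWithZero G₀] {a : G₀} (ha : a ≠ 0)
    {n s t : ℕ} (hst : s < t) (ht : t ≤ n) (h : a ^ s = a ^ t) : a ^ n ! = 1 := by
  obtain ⟨q, hq⟩ := Nat.dvd_factorial (Nat.sub_pos_of_lt hst) (by omega : t - s ≤ n)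
  rw [hq, pow_mul, pow_sub₀ a ha hst.le, ← h, mul_inv_cancel₀ (pow_ne_zero _ ha), one_pow]

lemma eq_of_sum_smul_eq_of_norm_le {E ι : Type*} [NormedAddCommGroup E] [InnerProductSpace ℝ E]
    {s : Finset ι} {w : ι → ℝ} {z : ι → E} {u : E} (hw₀ : ∀ i ∈ s, 0 ≤ w i)
    (hw₁ : ∑ i ∈ s, w i = 1) (hz : ∀ i ∈ s, ‖z i‖ ≤ ‖u‖) (hu : ∑ i ∈ s, w i • z i = u)
    {j : ι} (hj : j ∈ s) (hwj : w j ≠ 0) : z j = u := by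
  have hinner_le : ∀ i ∈ s, inner ℝ (z i) u ≤ ‖u‖ ^ 2 := fun i hi =>
    (real_inner_le_norm _ _).trans (by nlinarith [hz i hi, norm_nonneg (z i), norm_nonneg u])
  have hsum : ∑ i ∈ s, w i * (‖u‖ ^ 2 - inner ℝ (z i) u) = 0 := by
    simp only [mul_sub, sum_sub_distrib, ← sum_mul, hw₁, one_mul, ← real_inner_smul_left,
      ← sum_inner, hu, real_inner_self_eq_norm_sq, sub_self]
  have hzj : inner ℝ (z j) u = ‖u‖ ^ 2 := by
    have := (sum_eq_zero_iff_of_nonneg fun i hi =>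
      mul_nonneg (hw₀ i hi) (sub_nonneg.mpr (hinner_le i hi))).mp hsum j hj
    linarith [(mul_eq_zero.mp this).resolve_left hwj]
  have : ‖z j - u‖ ^ 2 ≤ 0 := by
    rw [norm_sub_sq_real, hzj]; nlinarith [hz j hj, norm_nonneg (z j)]
  exact sub_eq_zero.mp (norm_eq_zero.mp (by nlinarith [norm_nonneg (z j - u)]))

lemma Matrix.norm_mulVec_apply_le {R m n : Type*} [SeminormedRing R] [Fintype n]
    {N : Matrix m n R} {C : ℝ} (hN : ∀ i j, ‖N i j‖ ≤ C) (y : n → R) (i : m) :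
    ‖(N *ᵥ y) i‖ ≤ C * ∑ j, ‖y j‖ := by
  rw [mul_sum]
  exact (norm_sum_le _ _).trans <| sum_le_sum fun j _ =>
    (norm_mul_le _ _).trans (mul_le_mul_of_nonneg_right (hN i j) (norm_nonneg _))

lemma tendsto_choose_mul_pow_sub_of_norm_lt_one {R : Type*} [NormedRing R]
    [HasSummableGeomSeries R] {r : R} (hr : ‖r‖ < 1) (j : ℕ) :
    Tendsto (fun k => (k.choose j : R) * r ^ (k - j)) atTop (𝓝 0) := by
  have h := (summable_choose_mul_geometric_of_norm_lt_one j hr).tendsto_atTop_zero.comp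
    (tendsto_sub_atTop_nat j)
  refine h.congr' ?_
  filter_upwards [eventually_ge_atTop j] with k hk
  simp [Nat.sub_add_cancel hk]

namespace Matrix

variable {ι : Type*} [Fintype ι] [DecidableEq ι]

section PowerBounded

variable {A : Matrix ι ι ℂ} {μ : ℂ} {y : ι → ℂ} {C : ℝ}

lemma pow_mulVec_eq_sum {K : ℕ} (hy : (A - μ • 1) ^ K *ᵥ y = 0) (k : ℕ) :
    A ^ k *ᵥ y = ∑ j ∈ range K, ((k.choose j : ℂ) * μ ^ (k - j)) • ((A - μ • 1) ^ j *ᵥ y) := by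
  set B := A - μ • 1
  have hvanish : ∀ j, K ≤ j → B ^ j *ᵥ y = 0 := fun j hj => by
    rw [← Nat.sub_add_cancel hj, pow_add, ← mulVec_mulVec, hy, mulVec_zero]
  calc A ^ k *ᵥ y
      = ∑ j ∈ range (k + 1), ((k.choose j : ℂ) * μ ^ (k - j)) • (B ^ j *ᵥ y) := by
        rw [show A = B + μ • 1 by simp [B], ((Commute.one_right B).smul_right μ).add_pow,
          sum_mulVec]
        refine sum_congr rfl fun j _ => ?_
        rw [smul_pow, one_pow, mul_smul_comm, mul_one, ← Nat.cast_comm, ← nsmul_eq_mul,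
          ← Nat.cast_smul_eq_nsmul ℂ, smul_smul, smul_mulVec]
    _ = ∑ j ∈ range (k + 1 + K), ((k.choose j : ℂ) * μ ^ (k - j)) • (B ^ j *ᵥ y) :=
      sum_subset (range_subset_range.mpr (by omega)) fun j hj hjk => by
        simp [Nat.choose_eq_zero_of_lt (by simp at hj hjk; omega : k < j)]
    _ = ∑ j ∈ range K, ((k.choose j : ℂ) * μ ^ (k - j)) • (B ^ j *ᵥ y) :=
      (sum_subset (range_subset_range.mpr (by omega)) fun j _ hj => by
        simp [hvanish j (by simpa using hj)]).symm

lemma tendsto_pow_mulVec_of_norm_lt_one (hμ : ‖μ‖ < 1) {K : ℕ}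
    (hy : (A - μ • 1) ^ K *ᵥ y = 0) : Tendsto (fun k => A ^ k *ᵥ y) atTop (𝓝 0) := by
  simp_rw [pow_mulVec_eq_sum hy]
  simpa using tendsto_finsetSum (range K) fun j _ =>
    (tendsto_choose_mul_pow_sub_of_norm_lt_one hμ j).smul_const ((A - μ • 1) ^ j *ᵥ y)

lemma sub_smul_mulVec_eq_zero_of_sq (hA : ∀ k i j, ‖(A ^ k) i j‖ ≤ C) (hμ : 1 ≤ ‖μ‖)
    (hy : (A - μ • 1) ^ 2 *ᵥ y = 0) : (A - μ • 1) *ᵥ y = 0 := by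
  have hμ0 : μ ≠ 0 := norm_pos_iff.mp (by linarith)
  funext i
  -- `μ⁻ᵏ (Aᵏ y) i = y i + k μ⁻¹ ((A - μ) y) i` stays bounded, so its linear part vanishes.
  have hbdd : ∀ k : ℕ, ‖y i + k • (μ⁻¹ * ((A - μ • 1) *ᵥ y) i)‖ ≤ C * ∑ j, ‖y j‖ := fun k => by
    have hk : y i + k • (μ⁻¹ * ((A - μ • 1) *ᵥ y) i) = (μ ^ k)⁻¹ * (A ^ k *ᵥ y) i := by
      rw [pow_mulVec_eq_sum hy k]
      rcases k with _ | k
      · simp [sum_range_succ]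
      · simp [sum_range_succ, pow_succ]
        field_simp
    rw [hk, norm_mul, norm_inv, norm_pow]
    exact (mul_le_of_le_one_left (norm_nonneg _) (inv_le_one_of_one_le₀ (one_le_pow₀ hμ))).trans
      (norm_mulVec_apply_le (hA k) y i)
  simpa [hμ0] using eq_zero_of_forall_norm_add_nsmul_le hbdd

lemma sub_smul_mulVec_eq_zero_of_pow (hA : ∀ k i j, ‖(A ^ k) i j‖ ≤ C) (hμ : 1 ≤ ‖μ‖) {K : ℕ}
    (hy : (A - μ • 1) ^ K *ᵥ y = 0) : (A - μ • 1) *ᵥ y = 0 := by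
  suffices h : ∀ K, ∀ y, (A - μ • 1) ^ (K + 1) *ᵥ y = 0 → (A - μ • 1) *ᵥ y = 0 from
    h K y (by rw [pow_succ', ← mulVec_mulVec, hy, mulVec_zero])
  intro K
  induction K with
  | zero => simp
  | succ K ih =>
    intro y hy
    refine ih y ?_
    rw [pow_succ', ← mulVec_mulVec]
    refine sub_smul_mulVec_eq_zero_of_sq hA hμ ?_
    rw [mulVec_mulVec, ← pow_add, add_comm]
    exact hy

lemma pow_mulVec_of_mulVec_eq_smul (hy : A *ᵥ y = μ • y) (k : ℕ) : A ^ k *ᵥ y = μ ^ k • y := by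
  induction k with
  | zero => simp
  | succ k ih => rw [pow_succ', ← mulVec_mulVec, ih, mulVec_smul, hy, smul_smul, pow_succ]

lemma norm_le_one_of_mulVec_eq_smul (hA : ∀ k i j, ‖(A ^ k) i j‖ ≤ C) (hy₀ : y ≠ 0)
    (hy : A *ᵥ y = μ • y) : ‖μ‖ ≤ 1 := by
  obtain ⟨i, hi⟩ := Function.ne_iff.mp hy₀
  have hbdd : ∀ k, ‖μ‖ ^ k * ‖y i‖ ≤ C * ∑ j, ‖y j‖ := fun k => by
    simpa [pow_mulVec_of_mulVec_eq_smul hy k] using norm_mulVec_apply_le (hA k) y i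
  by_contra! hμ
  obtain ⟨k, hk⟩ := ((tendsto_pow_atTop_atTop_of_one_lt hμ).atTop_mul_const
    (norm_pos_iff.mpr hi)).eventually_gt_atTop (C * ∑ j, ‖y j‖) |>.exists
  exact (hbdd k).not_gt hk

theorem tendsto_pow_add_mulVec_sub_pow_mulVec (hA : ∀ k i j, ‖(A ^ k) i j‖ ≤ C) {d : ℕ}
    (hd : ∀ μ : ℂ, ∀ y ≠ 0, A *ᵥ y = μ • y → ‖μ‖ = 1 → μ ^ d = 1) (y : ι → ℂ) :
    Tendsto (fun k => A ^ (k + d) *ᵥ y - A ^ k *ᵥ y) atTop (𝓝 0) := by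
  let V : Submodule ℂ (ι → ℂ) :=
    { carrier := {y | Tendsto (fun k => A ^ (k + d) *ᵥ y - A ^ k *ᵥ y) atTop (𝓝 0)}
      add_mem' := fun ha hb => by simpa [mulVec_add, add_sub_add_comm] using ha.add hb
      zero_mem' := by simp
      smul_mem' := fun c y hy => by simpa [mulVec_smul, ← smul_sub] using hy.const_smul c }
  suffices h : ∀ μ, Module.End.maxGenEigenspace (toLinAlgEquiv' A) μ ≤ V by
    have := (Module.End.iSup_maxGenEigenspace_eq_top (toLinAlgEquiv' A)).ge.trans (iSup_le h)
    exact this Submodule.mem_top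
  intro μ y hy
  obtain ⟨K, hK⟩ := (Module.End.mem_maxGenEigenspace _ _ _).mp hy
  replace hK : (A - μ • 1) ^ K *ᵥ y = 0 := by
    rwa [← map_one toLinAlgEquiv', ← map_smul, ← map_sub, ← map_pow, toLinAlgEquiv'_apply] at hK
  show Tendsto (fun k => A ^ (k + d) *ᵥ y - A ^ k *ᵥ y) atTop (𝓝 0)
  rcases lt_or_ge ‖μ‖ 1 with hμ | hμ
  · have h := tendsto_pow_mulVec_of_norm_lt_one hμ hK
    simpa using (h.comp (tendsto_add_atTop_nat d)).sub h
  have hAy : A *ᵥ y = μ • y := by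
    have := sub_smul_mulVec_eq_zero_of_pow hA hμ hK
    rwa [sub_mulVec, smul_mulVec, one_mulVec, sub_eq_zero] at this
  rcases eq_or_ne y 0 with rfl | hy₀
  · simp
  have hμd := hd μ y hy₀ hAy (le_antisymm (norm_le_one_of_mulVec_eq_smul hA hy₀ hAy) hμ)
  simp [pow_mulVec_of_mulVec_eq_smul hAy, ← mulVec_mulVec, pow_add, hμd]

theorem tendsto_pow_add_sub_pow (hA : ∀ k i j, ‖(A ^ k) i j‖ ≤ C) {d : ℕ}
    (hd : ∀ μ : ℂ, ∀ y ≠ 0, A *ᵥ y = μ • y → ‖μ‖ = 1 → μ ^ d = 1) :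
    Tendsto (fun k => A ^ (k + d) - A ^ k) atTop (𝓝 0) := by
  refine tendsto_pi_nhds.mpr fun i => tendsto_pi_nhds.mpr fun j => ?_
  simpa [mulVec_single_one] using
    tendsto_pi_nhds.mp (tendsto_pow_add_mulVec_sub_pow_mulVec hA hd (Pi.single j 1)) i

end PowerBounded

section Stochastic

variable {M : Matrix ι ι ℝ} {x : ι → ℂ} {μ : ℂ}

lemma eq_mul_of_mulVec_eq_smul_of_forall_norm_le (hM : M ∈ rowStochastic ℝ ι)
    (hx : M.map (↑) *ᵥ x = μ • x) (hμ : ‖μ‖ = 1) {i : ι} (hi : ∀ j, ‖x j‖ ≤ ‖x i‖) {j : ι}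
    (hj : M i j ≠ 0) : x j = μ * x i :=
  eq_of_sum_smul_eq_of_norm_le (s := univ) (w := M i)
    (fun _ _ => nonneg_of_mem_rowStochastic hM) (sum_row_of_mem_rowStochastic hM i)
    (fun l _ => by rw [norm_mul, hμ, one_mul]; exact hi l)
    (by simpa [mulVec, dotProduct, Complex.real_smul] using congrFun hx i) (mem_univ j) hj

lemma pow_card_factorial_eq_one_of_mulVec_eq_smul (hM : M ∈ rowStochastic ℝ ι) (hx₀ : x ≠ 0)
    (hx : M.map (↑) *ᵥ x = μ • x) (hμ : ‖μ‖ = 1) : μ ^ (Fintype.card ι)! = 1 := by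
  have : Nonempty ι := not_isEmpty_iff.mp fun h => hx₀ (Subsingleton.elim _ _)
  obtain ⟨i₀, hi₀⟩ := Finite.exists_max fun i => ‖x i‖
  have hxi₀ : x i₀ ≠ 0 := fun h =>
    hx₀ <| funext fun j => norm_le_zero_iff.mp (by simpa [h] using hi₀ j)
  -- Following positive entries of `M` from a coordinate of maximal modulus multiplies it by `μ`.
  have horbit : ∀ t, ∃ i, x i = μ ^ t * x i₀ := by
    intro t
    induction t with
    | zero => exact ⟨i₀, by simp⟩
    | succ t ih =>
      obtain ⟨i, hi⟩ := ih
      obtain ⟨j, hj⟩ : ∃ j, M i j ≠ 0 := by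
        by_contra! h
        simpa [h] using sum_row_of_mem_rowStochastic hM i
      have hmax : ∀ l, ‖x l‖ ≤ ‖x i‖ := fun l => by
        rw [hi, norm_mul, norm_pow, hμ, one_pow, one_mul]
        exact hi₀ l
      refine ⟨j, ?_⟩
      rw [eq_mul_of_mulVec_eq_smul_of_forall_norm_le hM hx hμ hmax hj, hi, pow_succ', mul_assoc]
  choose f hf using horbit
  obtain ⟨s, hs, t, ht, hst, hfst⟩ := exists_ne_map_eq_of_card_lt_of_maps_to
    (s := range (Fintype.card ι + 1)) (t := univ) (by simp) (f := f) fun _ _ => mem_univ _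
  have hμ0 : μ ≠ 0 := norm_ne_zero_iff.mp (by simp [hμ])
  have hμst : μ ^ s = μ ^ t := mul_right_cancel₀ hxi₀ (by rw [← hf, ← hf, hfst])
  rw [mem_range, Nat.lt_succ_iff] at hs ht
  rcases hst.lt_or_gt with h | h
  · exact pow_factorial_eq_one_of_pow_eq_pow hμ0 h ht hμst
  · exact pow_factorial_eq_one_of_pow_eq_pow hμ0 h hs hμst.symm

theorem tendsto_pow_add_factorial_sub_pow (hM : M ∈ rowStochastic ℝ ι) :
    Tendsto (fun k => M ^ (k + (Fintype.card ι)!) - M ^ k) atTop (𝓝 0) := by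
  have hA : ∀ k i j, ‖(M.map Complex.ofRealHom ^ k) i j‖ ≤ 1 := fun k i j => by
    rw [← Matrix.map_pow]
    simpa [abs_of_nonneg (nonneg_of_mem_rowStochastic (pow_mem hM k))] using
      le_one_of_mem_rowStochastic (pow_mem hM k)
  have h := ((continuous_id.matrix_map Complex.continuous_re).tendsto 0).comp
    (tendsto_pow_add_sub_pow hA fun μ y hy₀ hy hμ =>
      pow_card_factorial_eq_one_of_mulVec_eq_smul hM hy₀ hy hμ)
  convert h using 2 with k
  · ext i j
    simp [← Matrix.map_pow]
  · simp

end Stochastic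

end Matrix

lemma tendsto_add_mul_sub_of_tendsto_add_sub {G : Type*} [AddCommGroup G] [TopologicalSpace G]
    [IsTopologicalAddGroup G] {u : ℕ → G} {d : ℕ}
    (h : Tendsto (fun k => u (k + d) - u k) atTop (𝓝 0)) (t : ℕ) :
    Tendsto (fun k => u (k + t * d) - u k) atTop (𝓝 0) := by
  induction t with
  | zero => simpa using tendsto_const_nhds
  | succ t ih =>
    have := (h.comp (tendsto_add_atTop_nat (t * d))).add ih
    rw [add_zero] at this
    refine this.congr fun k => ?_
    simp only [Function.comp_apply, add_mul, one_mul, ← add_assoc]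
    abel

lemma pfaSolves_zero_of_perm {n : ℕ} {Ayes Ano : Set (List Unit)} (σ : Equiv.Perm (Fin n))
    (s : Fin n) (F : Finset (Fin n)) (hyes : ∀ w ∈ Ayes, (σ ^ w.length) s ∈ F)
    (hno : ∀ w ∈ Ano, (σ ^ w.length) s ∉ F) : PFASolves n Ayes Ano 0 := by
  have hpow : ∀ k, σ.permMatrix ℝ ^ k = (σ ^ k).permMatrix ℝ := fun k => by
    induction k with
    | zero => simp
    | succ k ih => rw [pow_succ', ih, pow_succ, permMatrix_mul]
  have hacc : ∀ k, ∑ i ∈ F, (Pi.single s 1 ᵥ* σ.permMatrix ℝ ^ k) i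
      = if (σ ^ k) s ∈ F then 1 else 0 := fun k => by
    simp [hpow, single_vecMul, PEquiv.toMatrix_apply]
  refine ⟨Pi.single s 1, σ.permMatrix ℝ, F, fun i => ?_, by simp, fun i j => ?_, fun i => ?_,
    fun w hw => by rw [hacc, if_pos (hyes w hw), sub_zero],
    fun w hw => by rw [hacc, if_neg (hno w hw)]⟩
  · by_cases h : i = s <;> simp [h]
  · exact nonneg_of_mem_rowStochastic permMatrix_mem_rowStochastic
  · exact sum_row_of_mem_rowStochastic permMatrix_mem_rowStochastic i

lemma not_pfaSolves_of_forall_exists {n : ℕ} {Ayes Ano : Set (List Unit)} {ε : ℝ} (hε : ε < 1 / 2)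
    (t : ℕ) (h : ∀ K, ∃ w ∈ Ayes, ∃ w' ∈ Ano, K ≤ w.length ∧ w'.length = w.length + t * n !) :
    ¬ PFASolves n Ayes Ano ε := by
  rintro ⟨ini, M, F, -, -, hM₀, hM₁, hyes, hno⟩
  have hM : M ∈ rowStochastic ℝ (Fin n) := mem_rowStochastic_iff_sum.mpr ⟨hM₀, hM₁⟩
  have hacc : Tendsto (fun k => ∑ i ∈ F, (ini ᵥ* M ^ (k + t * n !)) i
      - ∑ i ∈ F, (ini ᵥ* M ^ k) i) atTop (𝓝 0) := by
    have hL : Continuous fun N : Matrix (Fin n) (Fin n) ℝ => ∑ i ∈ F, (ini ᵥ* N) i := by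
      fun_prop
    simpa [Function.comp_def, vecMul_sub, sum_sub_distrib] using (hL.tendsto 0).comp
      (tendsto_add_mul_sub_of_tendsto_add_sub (tendsto_pow_add_factorial_sub_pow hM) t)
  obtain ⟨K, hK⟩ := eventually_atTop.mp
    (hacc.eventually (Ioi_mem_nhds (by linarith : 2 * ε - 1 < 0)))
  obtain ⟨w, hw, w', hw', hKw, hlen⟩ := h K
  have hclose : 2 * ε - 1 < _ := hK w.length hKw
  linarith [hyes w hw, hlen ▸ hno w' hw']

open Real in
lemma cos_sq_half_mul_pi_div_le {p : ℕ} (hp : 7 ≤ p) (hodd : Odd p) :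
    cos ((p / 2 : ℕ) * (π / p)) ^ 2 ≤ 1 / 3 := by
  obtain ⟨m, rfl⟩ := hodd
  have hp' : (7 : ℝ) ≤ 2 * m + 1 := by exact_mod_cast hp
  rw [show (2 * m + 1) / 2 = m by omega, show (m : ℝ) * (π / ((2 * m + 1 : ℕ) : ℝ))
    = π / 2 - π / (2 * (2 * m + 1)) by push_cast; field_simp; ring, cos_pi_div_two_sub]
  have hx₀ : 0 ≤ π / (2 * (2 * m + 1)) := by positivity
  have hx : π / (2 * (2 * m + 1)) ≤ 3.15 / 14 :=
    div_le_div₀ (by norm_num) pi_lt_d2.le (by norm_num) (by linarith)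
  nlinarith [sin_sq_le_sq (x := π / (2 * (2 * m + 1)))]

lemma mem_AyesP_of_length_mod_eq_zero {p : ℕ} {w : List Unit} (hw : w.length % p = 0) :
    w ∈ AyesP p := by
  norm_num [AyesP, hw]

lemma mem_AnoP_of_length_mod_eq_half {p : ℕ} (hp : 7 ≤ p) (hodd : Odd p) {w : List Unit}
    (hw : w.length % p = p / 2) : w ∈ AnoP p := by
  simpa [AnoP, hw] using cos_sq_half_mul_pi_div_le hp hodd

lemma Fin.val_addRight_one_pow_apply_zero (p : ℕ) [NeZero p] (k : ℕ) :
    (((Equiv.addRight (1 : Fin p)) ^ k) 0 : ℕ) = k % p := by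
  induction k with
  | zero => simp
  | succ k ih =>
    rw [pow_succ', Equiv.Perm.mul_apply, Equiv.coe_addRight, Fin.val_add, ih, Fin.val_one',
      Nat.add_mod_mod, Nat.add_mod]
    simp

theorem pfaSolves_AyesP_AnoP (p : ℕ) [NeZero p] : PFASolves p (AyesP p) (AnoP p) 0 := by
  refine pfaSolves_zero_of_perm (Equiv.addRight 1) 0
    {i | (2 : ℝ) / 3 ≤ Real.cos ((i : ℕ) * (Real.pi / p)) ^ 2} (fun w hw => ?_) (fun w hw => ?_) <;>
    simp only [mem_filter, mem_univ, true_and, Fin.val_addRight_one_pow_apply_zero]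
  · exact hw
  · exact fun h => absurd (h.trans hw) (by norm_num)

theorem not_pfaSolves_AyesP_AnoP_of_lt {p n : ℕ} {ε : ℝ} (hp : p.Prime) (hp6 : 6 < p)
    (hε : ε < 1 / 2) (hnp : n < p) : ¬ PFASolves n (AyesP p) (AnoP p) ε := by
  have hcop : Nat.Coprime n ! p :=
    (hp.coprime_iff_not_dvd.mpr fun h => by have := hp.dvd_factorial.mp h; omega).symm
  obtain ⟨t, -, ht⟩ := Nat.exists_mul_mod_eq_of_coprime (p / 2) hcop hp.ne_zero
  refine not_pfaSolves_of_forall_exists hε t fun K => ⟨List.replicate (p * K) (), ?_,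
    List.replicate (p * K + t * n !) (), ?_, ?_, by simp⟩
  · exact mem_AyesP_of_length_mod_eq_zero (by simp)
  · refine mem_AnoP_of_length_mod_eq_half (by omega) (hp.odd_of_ne_two (by omega)) ?_
    rw [List.length_replicate, Nat.mul_add_mod, mul_comm, ht, Nat.mod_eq_of_lt (by omega)]
  · simpa using Nat.le_mul_of_pos_left K hp.pos

/-- for a prime `p > 6`, there is a PFA with `p` states solving
`A(p)` exactly, and every PFA solving `A(p)` with error probability
`0 ≤ ε < 1/2` has at least `p` states: the minimal PFA solving `A(p)` has
exactly `p` states. -/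
theorem minimal_pfa_has_p_states (p : ℕ) (hp : p.Prime) (hp6 : 6 < p) :
    PFASolves p (AyesP p) (AnoP p) 0 ∧
    ∀ ε : ℝ, 0 ≤ ε → ε < 1 / 2 →
      ∀ n : ℕ, PFASolves n (AyesP p) (AnoP p) ε → p ≤ n := by
  have : NeZero p := ⟨hp.ne_zero⟩
  exact ⟨pfaSolves_AyesP_AnoP p, fun ε _ hε n hn =>
    not_lt.mp fun hnp => not_pfaSolves_AyesP_AnoP_of_lt hp hp6 hε hnp hn⟩
end
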